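/- arXiv:1504.00086 — 6 statements merged into one kernel-verified Lean document; each statement's English description precedes it below -/
import Mathlib

section
/- Let H be a finite-dimensional real inner product space, B a set of unit-norm atoms, A the k-simple subset relative to B with integer k > 1, and let Φ : H → ℝ^m be a linear map having the (k, α, β)-generalized-weaken-RIP for distortions α, β > 0. Then for every ρ > 0, Φ satisfies the (ρ, α̃)-robust width property over the atom norm ‖·‖_B, i.e. for every x ∈ H with ‖x‖ > ρ‖x‖_B one has ‖Φx‖₂² ≥ (α² − (β² − α²)/(ρ²(k−1))) ‖x‖². -/
open scoped BigOperators

/-- The atom norm induced by a set of atoms `B`. -/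
noncomputable def atomNorm {H : Type*} [AddCommGroup H] [Module ℝ H] (B : Set H) (x : H) : ℝ :=
  sInf { r : ℝ | ∃ (S : Finset H) (σ : H → ℝ), ↑S ⊆ B ∧ (∀ b ∈ S, 0 ≤ σ b) ∧
    x = ∑ b ∈ S, σ b • b ∧ r = ∑ b ∈ S, σ b }

/-- The `k`-simple subset relative to a set of atoms `B`. -/
def simpleSet {H : Type*} [AddCommGroup H] [Module ℝ H] (B : Set H) (k : ℕ) : Set H :=
  { x | ∃ (σ : Fin k → ℝ) (b : Fin k → H),
      (∀ i, 0 ≤ σ i) ∧ (∀ i, b i ∈ B) ∧ x = ∑ i, σ i • b i }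

/-- `B` spans `H` via finite nonnegative combinations. -/
def Spans {H : Type*} [AddCommGroup H] [Module ℝ H] (B : Set H) : Prop :=
  ∀ x : H, ∃ (S : Finset H) (σ : H → ℝ), ↑S ⊆ B ∧ (∀ b ∈ S, 0 ≤ σ b) ∧
    x = ∑ b ∈ S, σ b • b

/-! Write `x = ∑ σ_b • b` with `ρ s < ‖x‖` for `s = ∑ σ_b` (possible as `ρ ‖x‖_B < ‖x‖`),
and read `p_b = σ_b / s` as a probability on the atoms. A sum of `k` independent draws from `p`
is `k`-simple, so `α² ‖∑ bᵢ‖² ≤ ‖Φ ∑ bᵢ‖²` pointwise. Taking expectations with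
`E ‖∑ v(bᵢ)‖² = k E ‖v(b)‖² + k (k - 1) ‖E v(b)‖²` and `E b = x / s` gives
`α² (s² + (k - 1) ‖x‖²) ≤ β² s² + (k - 1) ‖Φ x‖²`; with `ρ s < ‖x‖` and `α ≤ β` this is the bound.
Expectations over `k` draws are sums over tuples `f : Fin k → ι` weighted by `∏ t, p (f t)`. -/

open Finset RealInnerProductSpace

section ProductWeights

variable {ι : Type*} [Fintype ι] {p : ι → ℝ}

theorem sum_prod_smul_fin_succ {E : Type*} [AddCommGroup E] [Module ℝ E] {n : ℕ}
    (g : (Fin (n + 1) → ι) → E) :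
    ∑ f : Fin (n + 1) → ι, (∏ t, p (f t)) • g f =
      ∑ j, p j • ∑ f : Fin n → ι, (∏ t, p (f t)) • g (Fin.cons j f) := by
  rw [← (Fin.consEquiv fun _ => ι).sum_comp, Fintype.sum_prod_type]
  simp only [Fin.prod_univ_succ, mul_smul, smul_sum]
  rfl

theorem sum_prod_eq_one (hp : ∑ j, p j = 1) (k : ℕ) : ∑ f : Fin k → ι, ∏ t, p (f t) = 1 := by
  rw [← Fintype.sum_pow, hp, one_pow]

theorem sum_prod_smul_sum (hp : ∑ j, p j = 1) {E : Type*} [AddCommGroup E] [Module ℝ E]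
    (v : ι → E) (k : ℕ) :
    ∑ f : Fin k → ι, (∏ t, p (f t)) • ∑ t, v (f t) = (k : ℝ) • ∑ j, p j • v j := by
  induction k with
  | zero => simp
  | succ n ih =>
    simp only [sum_prod_smul_fin_succ, Fin.sum_univ_succ, Fin.cons_zero, Fin.cons_succ,
      smul_add, sum_add_distrib, ← sum_smul, sum_prod_eq_one hp, ih, one_smul]
    rw [hp]
    push_cast
    module

theorem sum_prod_mul_norm_sum_sq (hp : ∑ j, p j = 1) {E : Type*} [NormedAddCommGroup E]
    [InnerProductSpace ℝ E] (v : ι → E) (k : ℕ) :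
    ∑ f : Fin k → ι, (∏ t, p (f t)) * ‖∑ t, v (f t)‖ ^ 2 =
      k * ∑ j, p j * ‖v j‖ ^ 2 + k * (k - 1) * ‖∑ j, p j • v j‖ ^ 2 := by
  induction k with
  | zero => simp
  | succ n ih =>
    have hcross : ∀ j, ∑ f : Fin n → ι, (∏ t, p (f t)) * (2 * ⟪v j, ∑ t, v (f t)⟫) =
        2 * n * ⟪v j, ∑ i, p i • v i⟫ := by
      intro j
      rw [mul_assoc, ← real_inner_smul_right, ← sum_prod_smul_sum hp, inner_sum, mul_sum]
      exact sum_congr rfl fun f _ => by rw [real_inner_smul_right]; ring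
    simp only [← smul_eq_mul (a := ∏ t, _), sum_prod_smul_fin_succ]
    simp only [smul_eq_mul, Fin.sum_univ_succ, Fin.cons_zero, Fin.cons_succ, norm_add_sq_real,
      mul_add, sum_add_distrib, ← sum_mul, sum_prod_eq_one hp, one_mul, hcross, ih]
    have hmean : ∑ j, p j * ⟪v j, ∑ i, p i • v i⟫ = ‖∑ i, p i • v i‖ ^ 2 := by
      simp only [← real_inner_smul_left, ← sum_inner, real_inner_self_eq_norm_sq]
    simp only [mul_left_comm (p _) (2 * (n : ℝ)), ← mul_sum, hmean, hp]
    push_cast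
    ring

theorem mul_moment_le_of_forall_tuple {E F : Type*} [NormedAddCommGroup E]
    [InnerProductSpace ℝ E] [NormedAddCommGroup F] [InnerProductSpace ℝ F]
    (hp0 : ∀ j, 0 ≤ p j) (hp : ∑ j, p j = 1) {k : ℕ} (hk : 0 < k) {c : ℝ} (v : ι → E) (u : ι → F)
    (h : ∀ f : Fin k → ι, c * ‖∑ t, v (f t)‖ ^ 2 ≤ ‖∑ t, u (f t)‖ ^ 2) :
    c * (∑ j, p j * ‖v j‖ ^ 2 + (k - 1) * ‖∑ j, p j • v j‖ ^ 2) ≤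
      ∑ j, p j * ‖u j‖ ^ 2 + (k - 1) * ‖∑ j, p j • u j‖ ^ 2 := by
  have hsum : ∑ f : Fin k → ι, (∏ t, p (f t)) * (c * ‖∑ t, v (f t)‖ ^ 2) ≤
      ∑ f : Fin k → ι, (∏ t, p (f t)) * ‖∑ t, u (f t)‖ ^ 2 :=
    sum_le_sum fun f _ => mul_le_mul_of_nonneg_left (h f) (prod_nonneg fun t _ => hp0 _)
  simp only [mul_left_comm _ c, ← mul_sum, sum_prod_mul_norm_sum_sq hp] at hsum
  refine le_of_mul_le_mul_left ?_ (Nat.cast_pos.2 hk : (0 : ℝ) < k)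
  linarith

end ProductWeights

theorem exists_sum_lt_of_atomNorm_lt {H : Type*} [AddCommGroup H] [Module ℝ H] {B : Set H}
    (hB : Spans B) {x : H} {r : ℝ} (h : atomNorm B x < r) :
    ∃ (S : Finset H) (σ : H → ℝ), ↑S ⊆ B ∧ (∀ b ∈ S, 0 ≤ σ b) ∧
      x = ∑ b ∈ S, σ b • b ∧ ∑ b ∈ S, σ b < r := by
  obtain ⟨S, σ, hSB, hσ, hx⟩ := hB x
  obtain ⟨_, ⟨S, σ, hSB, hσ, hx, rfl⟩, hlt⟩ :=
    exists_lt_of_csInf_lt (by exact ⟨_, S, σ, hSB, hσ, hx, rfl⟩) h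
  exact ⟨S, σ, hSB, hσ, hx, hlt⟩

theorem sum_mem_simpleSet {H : Type*} [AddCommGroup H] [Module ℝ H] {B : Set H} {k : ℕ}
    (b : Fin k → H) (hb : ∀ t, b t ∈ B) : ∑ t, b t ∈ simpleSet B k :=
  ⟨1, b, fun _ => zero_le_one, hb, by simp⟩

section WeakenRIP

variable {H F : Type*} [NormedAddCommGroup H] [InnerProductSpace ℝ H] [NormedAddCommGroup F]
  [InnerProductSpace ℝ F] {B : Set H} {k : ℕ} {α β : ℝ} {Φ : H →ₗ[ℝ] F}

theorem le_of_weakenRIP (hBunit : ∀ b ∈ B, ‖b‖ = 1) (hk : 0 < k)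
    (hRIPa : ∀ x ∈ simpleSet B k, α * ‖x‖ ≤ ‖Φ x‖) (hRIPb : ∀ b ∈ B, ‖Φ b‖ ≤ β)
    {b : H} (hb : b ∈ B) : α ≤ β := by
  have h := hRIPa _ (sum_mem_simpleSet (fun _ => b) fun _ => hb)
  simp only [sum_const, card_univ, Fintype.card_fin, map_nsmul, RCLike.norm_nsmul ℝ,
    nsmul_eq_mul, hBunit b hb, mul_one] at h
  have hk' : (0 : ℝ) < k := by exact_mod_cast hk
  exact (le_of_mul_le_mul_left (by linarith) hk').trans (hRIPb b hb)

theorem weakenRIP_moment_ineq (hBunit : ∀ b ∈ B, ‖b‖ = 1) (hk : 0 < k) (hα : 0 ≤ α)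
    (hRIPa : ∀ x ∈ simpleSet B k, α * ‖x‖ ≤ ‖Φ x‖) (hRIPb : ∀ b ∈ B, ‖Φ b‖ ≤ β)
    {S : Finset H} (hSB : ↑S ⊆ B) {σ : H → ℝ} (hσ : ∀ b ∈ S, 0 ≤ σ b)
    (hs : 0 < ∑ b ∈ S, σ b) :
    α ^ 2 * ((∑ b ∈ S, σ b) ^ 2 + (k - 1) * ‖∑ b ∈ S, σ b • b‖ ^ 2) ≤
      β ^ 2 * (∑ b ∈ S, σ b) ^ 2 + (k - 1) * ‖Φ (∑ b ∈ S, σ b • b)‖ ^ 2 := by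
  set s := ∑ b ∈ S, σ b
  set x := ∑ b ∈ S, σ b • b
  set p : S → ℝ := fun j => σ j / s
  have hp0 : ∀ j, 0 ≤ p j := fun j => div_nonneg (hσ j j.2) hs.le
  have hp1 : ∑ j, p j = 1 := by
    rw [← sum_div, sum_coe_sort S σ, div_self hs.ne']
  have hmean : ∑ j : S, p j • (j : H) = s⁻¹ • x := by
    rw [smul_sum, ← sum_coe_sort S]
    exact sum_congr rfl fun j _ => by simp only [p, smul_smul, div_eq_inv_mul]
  have hmeanΦ : ∑ j : S, p j • Φ j = s⁻¹ • Φ x := by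
    rw [← map_smul, ← hmean, map_sum]
    exact sum_congr rfl fun j _ => (map_smul Φ _ _).symm
  have hunit : ∑ j : S, p j * ‖(j : H)‖ ^ 2 = 1 := by
    rw [← hp1]
    exact sum_congr rfl fun j _ => by rw [hBunit _ (hSB j.2), one_pow, mul_one]
  have hbound : ∑ j : S, p j * ‖Φ j‖ ^ 2 ≤ β ^ 2 := by
    calc ∑ j : S, p j * ‖Φ j‖ ^ 2 ≤ ∑ j : S, p j * β ^ 2 :=
          sum_le_sum fun j _ => mul_le_mul_of_nonneg_left
            (pow_le_pow_left₀ (norm_nonneg _) (hRIPb _ (hSB j.2)) 2) (hp0 j)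
      _ = β ^ 2 := by rw [← sum_mul, hp1, one_mul]
  have key := mul_moment_le_of_forall_tuple hp0 hp1 hk (fun j : S => (j : H)) (fun j => Φ j)
    fun f => by
      have h := hRIPa _ (sum_mem_simpleSet _ fun t => hSB (f t).2)
      rw [map_sum] at h
      simpa only [mul_pow] using pow_le_pow_left₀ (by positivity) h 2
  rw [hunit, hmean, hmeanΦ, norm_smul, norm_smul, norm_inv, Real.norm_of_nonneg hs.le] at key
  have hs2 : 0 < s ^ 2 := by positivity
  calc α ^ 2 * (s ^ 2 + (k - 1) * ‖x‖ ^ 2)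
      = s ^ 2 * (α ^ 2 * (1 + (k - 1) * (s⁻¹ * ‖x‖) ^ 2)) := by field_simp
    _ ≤ s ^ 2 * (∑ j : S, p j * ‖Φ j‖ ^ 2 + (k - 1) * (s⁻¹ * ‖Φ x‖) ^ 2) :=
      mul_le_mul_of_nonneg_left key hs2.le
    _ ≤ s ^ 2 * (β ^ 2 + (k - 1) * (s⁻¹ * ‖Φ x‖) ^ 2) := by gcongr
    _ = β ^ 2 * s ^ 2 + (k - 1) * ‖Φ x‖ ^ 2 := by field_simp

end WeakenRIP

theorem robustWidth_bound_of_moment_ineq {a b κ ρ s X Y : ℝ} (hab : a ≤ b) (hκ : 1 < κ)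
    (hρ : 0 < ρ) (hs : 0 ≤ s) (hρs : ρ * s < X)
    (h : a * (s ^ 2 + (κ - 1) * X ^ 2) ≤ b * s ^ 2 + (κ - 1) * Y) :
    (a - (b - a) / (ρ ^ 2 * (κ - 1))) * X ^ 2 ≤ Y := by
  have hc : 0 < ρ ^ 2 * (κ - 1) := by have := sub_pos.2 hκ; positivity
  have hs2 : ρ ^ 2 * s ^ 2 ≤ X ^ 2 := by nlinarith [mul_nonneg hρ.le hs]
  rw [sub_mul, div_mul_eq_mul_div, sub_le_iff_le_add, ← sub_le_iff_le_add', le_div_iff₀ hc]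
  nlinarith [mul_le_mul_of_nonneg_left hs2 (sub_nonneg.2 hab)]

theorem weakenRIP_implies_robustWidth_general
    {H : Type*} [NormedAddCommGroup H] [InnerProductSpace ℝ H]
    {m : ℕ} (B : Set H)
    (hBspan : Spans B) (hBunit : ∀ b ∈ B, ‖b‖ = 1)
    (k : ℕ) (hk : 1 < k) (α β : ℝ) (hα : 0 < α)
    (Φ : H →ₗ[ℝ] EuclideanSpace ℝ (Fin m))
    (hRIPa : ∀ x ∈ simpleSet B k, α * ‖x‖ ≤ ‖Φ x‖)
    (hRIPb : ∀ b ∈ B, ‖Φ b‖ ≤ β)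
    (ρ : ℝ) (hρ : 0 < ρ) :
    ∀ x : H, ρ * atomNorm B x < ‖x‖ →
      (α ^ 2 - (β ^ 2 - α ^ 2) / (ρ ^ 2 * ((k : ℝ) - 1))) * ‖x‖ ^ 2 ≤ ‖Φ x‖ ^ 2 := by
  intro x hx
  obtain ⟨S, σ, hSB, hσ, rfl, hlt⟩ := exists_sum_lt_of_atomNorm_lt hBspan ((lt_div_iff₀' hρ).2 hx)
  have hρs := (lt_div_iff₀' hρ).1 hlt
  have hs : 0 < ∑ b ∈ S, σ b := by
    refine (sum_nonneg hσ).lt_of_ne fun h => ?_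
    have hσ0 := (sum_eq_zero_iff_of_nonneg hσ).1 h.symm
    have hx0 : ∑ b ∈ S, σ b • b = 0 := sum_eq_zero fun b hb => by simp [hσ0 b hb]
    simp [← h, hx0] at hρs
  obtain ⟨b, hb⟩ := nonempty_of_sum_ne_zero hs.ne'
  have hαβ := le_of_weakenRIP hBunit (by omega) hRIPa hRIPb (hSB hb)
  exact robustWidth_bound_of_moment_ineq (pow_le_pow_left₀ hα.le hαβ 2) (by exact_mod_cast hk) hρ
    hs.le hρs (weakenRIP_moment_ineq hBunit (by omega) hα.le hRIPa hRIPb hSB hσ hs)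

/-- Generalized weaken RIP implies the robust width property over the atom norm. -/
theorem weakenRIP_implies_robustWidth
    {H : Type*} [NormedAddCommGroup H] [InnerProductSpace ℝ H] [FiniteDimensional ℝ H]
    {m : ℕ} (B : Set H)
    (hBsym : ∀ b ∈ B, -b ∈ B) (hBspan : Spans B) (hBunit : ∀ b ∈ B, ‖b‖ = 1)
    (k : ℕ) (hk : 1 < k) (α β : ℝ) (hα : 0 < α) (hβ : 0 < β)
    (Φ : H →ₗ[ℝ] EuclideanSpace ℝ (Fin m))
    (hRIPa : ∀ x ∈ simpleSet B k, α * ‖x‖ ≤ ‖Φ x‖)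
    (hRIPb : ∀ b ∈ B, ‖Φ b‖ ≤ β)
    (ρ : ℝ) (hρ : 0 < ρ) :
    ∀ x : H, ρ * atomNorm B x < ‖x‖ →
      (α ^ 2 - (β ^ 2 - α ^ 2) / (ρ ^ 2 * ((k : ℝ) - 1))) * ‖x‖ ^ 2 ≤ ‖Φ x‖ ^ 2 :=
  weakenRIP_implies_robustWidth_general B hBspan hBunit k hk α β hα Φ hRIPa hRIPb ρ hρ
end

section
/- Let Γ ∈ ℝ^{m×n} be a matrix having the (k, α, β)-weaken-RIP for an integer k with 1 < k ≤ n and distortions α, β > 0. Then for every ρ > 0 and every x ∈ ℝⁿ with ‖x‖₂ > ρ‖x‖₁, one has ‖Γx‖₂² ≥ (α² − (β² − α²)/(ρ²(k−1))) ‖x‖₂²; that is, Γ satisfies the (ρ, α̃)-robust width property over the ℓ1 norm with α̃² = α² − (β² − α²)/(ρ²(k−1)). -/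
/-!
Draw `k` indices independently from the distribution `p i = |x i| / ‖x‖₁`; a sum
`∑ v, (∏ t, p (v t)) * F v` over `v : Fin k → ι` is the expectation of `F` over these draws. The
vector `z = ∑ₜ sign (x (v t)) • e (v t)` is `k`-sparse, so `α² ‖z‖² ≤ ‖Γ z‖²` for every draw.
For i.i.d. vectors `E ‖∑ₜ yₜ‖² = k E ‖y‖² + k (k - 1) ‖E y‖²`, and `E (sign xᵢ • eᵢ) = x / ‖x‖₁`,
so averaging gives `k α² + k (k - 1) α² ‖x‖₂² / ‖x‖₁² ≤ k β² + k (k - 1) ‖Γ x‖₂² / ‖x‖₁²`.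
That is `(k - 1) (‖Γ x‖₂² - α² ‖x‖₂²) ≥ (α² - β²) ‖x‖₁²`, and since `α ≤ β` (test the RIP on a
basis vector) the hypothesis `ρ ‖x‖₁ < ‖x‖₂` lets us replace `‖x‖₁²` by `‖x‖₂² / ρ²`.
-/

open Finset Matrix

section IidSum

variable {R ι : Type*} [CommRing R] [Fintype ι] {k : ℕ}

theorem sum_pi_prod_mul_prod (p : ι → R) (q : Fin k → ι → R) :
    ∑ v : Fin k → ι, (∏ t, p (v t)) * ∏ t, q t (v t) = ∏ t, ∑ i, p i * q t i := by
  classical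
  simp_rw [← prod_mul_distrib]
  exact (Fintype.prod_sum fun t i => p i * q t i).symm

variable {p : ι → R}

theorem sum_pi_prod_mul_apply (hp : ∑ i, p i = 1) (f : ι → R) (u : Fin k) :
    ∑ v : Fin k → ι, (∏ t, p (v t)) * f (v u) = ∑ i, p i * f i := by
  classical
  have hprod (a : Fin k → R) : ∏ t, (if t = u then a t else 1) = a u := by
    simp [prod_ite_eq']
  have h := sum_pi_prod_mul_prod p fun t i => if t = u then f i else 1
  simp_rw [hprod] at h
  rw [h, ← hprod fun _ => ∑ i, p i * f i]
  refine prod_congr rfl fun t _ => ?_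
  split_ifs <;> simp [hp]

theorem sum_pi_prod_mul_apply_mul_apply (hp : ∑ i, p i = 1) (f g : ι → R) {u u' : Fin k}
    (huu' : u ≠ u') :
    ∑ v : Fin k → ι, (∏ t, p (v t)) * (f (v u) * g (v u')) =
      (∑ i, p i * f i) * ∑ i, p i * g i := by
  classical
  have hprod (a b : Fin k → R) :
      ∏ t, (if t = u then a t else if t = u' then b t else 1) = a u * b u' := by
    rw [prod_eq_mul u u' huu' (fun t _ ht => by simp [ht.1, ht.2]) (by simp) (by simp)]
    simp [huu'.symm]
  have h := sum_pi_prod_mul_prod p fun t i => if t = u then f i else if t = u' then g i else 1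
  simp_rw [hprod] at h
  rw [h, ← hprod (fun _ => ∑ i, p i * f i) (fun _ => ∑ i, p i * g i)]
  refine prod_congr rfl fun t _ => ?_
  split_ifs <;> simp [hp]

theorem sum_pi_prod_mul_sum_sq (hp : ∑ i, p i = 1) (f : ι → R) :
    ∑ v : Fin k → ι, (∏ t, p (v t)) * (∑ t, f (v t)) ^ 2 =
      k * ∑ i, p i * f i ^ 2 + k * (k - 1) * (∑ i, p i * f i) ^ 2 := by
  classical
  have hpair (u u' : Fin k) :
      ∑ v : Fin k → ι, (∏ t, p (v t)) * (f (v u) * f (v u')) =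
        if u' = u then ∑ i, p i * f i ^ 2 else (∑ i, p i * f i) ^ 2 := by
    split_ifs with h
    · subst h; simp_rw [← sq]; exact sum_pi_prod_mul_apply hp (f · ^ 2) _
    · rw [sq]; exact sum_pi_prod_mul_apply_mul_apply hp f f (Ne.symm h)
  have hrow (u : Fin k) :
      ∑ u' : Fin k, (if u' = u then ∑ i, p i * f i ^ 2 else (∑ i, p i * f i) ^ 2) =
        ∑ i, p i * f i ^ 2 + (k - 1) * (∑ i, p i * f i) ^ 2 := by
    rw [← add_sum_erase _ _ (mem_univ u), if_pos rfl,
      sum_congr rfl fun u' hu' => if_neg (ne_of_mem_erase hu'), sum_const,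
      card_erase_of_mem (mem_univ u), card_univ, Fintype.card_fin, nsmul_eq_mul,
      Nat.cast_pred (Fin.pos u)]
  calc ∑ v : Fin k → ι, (∏ t, p (v t)) * (∑ t, f (v t)) ^ 2
      = ∑ u, ∑ u', ∑ v : Fin k → ι, (∏ t, p (v t)) * (f (v u) * f (v u')) := by
        simp_rw [sq, sum_mul_sum, mul_sum]
        rw [sum_comm]
        exact sum_congr rfl fun u _ => sum_comm
    _ = k * ∑ i, p i * f i ^ 2 + k * (k - 1) * (∑ i, p i * f i) ^ 2 := by
        simp_rw [hpair, hrow, sum_const, card_univ, Fintype.card_fin, nsmul_eq_mul]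
        ring

theorem sum_pi_prod_mul_sum_sq_sum_apply {κ : Type*} [Fintype κ] (hp : ∑ i, p i = 1)
    (y : ι → κ → R) :
    ∑ v : Fin k → ι, (∏ t, p (v t)) * ∑ l, (∑ t, y (v t)) l ^ 2 =
      k * ∑ i, p i * ∑ l, y i l ^ 2 + k * (k - 1) * ∑ l, (∑ i, p i • y i) l ^ 2 := by
  calc ∑ v : Fin k → ι, (∏ t, p (v t)) * ∑ l, (∑ t, y (v t)) l ^ 2
      = ∑ l, ∑ v : Fin k → ι, (∏ t, p (v t)) * (∑ t, y (v t) l) ^ 2 := by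
        simp_rw [Finset.sum_apply, mul_sum]
        exact sum_comm
    _ = ∑ l, (k * ∑ i, p i * y i l ^ 2 + k * (k - 1) * (∑ i, p i * y i l) ^ 2) :=
        sum_congr rfl fun l _ => sum_pi_prod_mul_sum_sq hp (y · l)
    _ = _ := by
        simp_rw [sum_add_distrib, ← mul_sum, Finset.sum_apply, Pi.smul_apply, smul_eq_mul]
        rw [sum_comm]
        simp_rw [mul_sum]

end IidSum

theorem ncard_support_sum_pi_single_le {ι M : Type*} [DecidableEq ι] [AddCommMonoid M] {k : ℕ}
    (v : Fin k → ι) (c : Fin k → M) :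
    {i | (∑ t, Pi.single (v t) (c t) : ι → M) i ≠ 0}.ncard ≤ k := by
  have hsub : {i | (∑ t, Pi.single (v t) (c t) : ι → M) i ≠ 0} ⊆ Set.range v := by
    intro i hi
    by_contra hiv
    rw [Set.mem_ofPred_eq, Finset.sum_apply] at hi
    exact hi (sum_eq_zero fun t _ => Pi.single_eq_of_ne (fun h => hiv ⟨t, h.symm⟩) _)
  calc _ ≤ (Set.range v).ncard := Set.ncard_le_ncard hsub (Set.finite_range v)
    _ ≤ (Set.univ : Set (Fin k)).ncard := by
        rw [← Set.image_univ]; exact Set.ncard_image_le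
    _ = k := by simp

section SparseLowerBound

variable {κ ι : Type*} [Fintype κ] [Fintype ι] [DecidableEq ι] (Γ : Matrix κ ι ℝ) {k : ℕ}
  {a b : ℝ}

theorem sparse_lower_bound_average
    (hsparse : ∀ z : ι → ℝ, {i | z i ≠ 0}.ncard ≤ k → a * ∑ i, z i ^ 2 ≤ ∑ l, (Γ *ᵥ z) l ^ 2)
    {p : ι → ℝ} (hp0 : ∀ i, 0 ≤ p i) (hp : ∑ i, p i = 1) (c : ι → ℝ) :
    a * (k * ∑ i, p i * c i ^ 2 + k * (k - 1) * ∑ i, (p i * c i) ^ 2) ≤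
      k * ∑ i, p i * c i ^ 2 * ∑ l, (Γ *ᵥ Pi.single i 1) l ^ 2 +
        k * (k - 1) * ∑ l, (Γ *ᵥ fun i => p i * c i) l ^ 2 := by
  set y : ι → ι → ℝ := fun i => Pi.single i (c i)
  have hy_sq (i : ι) : ∑ l, y i l ^ 2 = c i ^ 2 := by
    simp [y, Pi.single_apply]
  have hΓy_sq (i : ι) : ∑ l, (Γ *ᵥ y i) l ^ 2 = c i ^ 2 * ∑ l, (Γ *ᵥ Pi.single i 1) l ^ 2 := by
    simp [y, mulVec_single, mul_pow, mul_sum, mul_comm]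
  have hy_mean : ∑ i, p i • y i = fun i => p i * c i := by
    simp_rw [y, ← Pi.single_smul, smul_eq_mul]
    exact univ_sum_single _
  have hz (v : Fin k → ι) : a * ∑ l, (∑ t, y (v t)) l ^ 2 ≤ ∑ l, (∑ t, Γ *ᵥ y (v t)) l ^ 2 := by
    rw [← mulVec_sum]
    exact hsparse _ (ncard_support_sum_pi_single_le v _)
  calc a * (k * ∑ i, p i * c i ^ 2 + k * (k - 1) * ∑ i, (p i * c i) ^ 2)
      = a * ∑ v : Fin k → ι, (∏ t, p (v t)) * ∑ l, (∑ t, y (v t)) l ^ 2 := by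
        rw [sum_pi_prod_mul_sum_sq_sum_apply hp, hy_mean]
        simp_rw [hy_sq]
    _ ≤ ∑ v : Fin k → ι, (∏ t, p (v t)) * ∑ l, (∑ t, Γ *ᵥ y (v t)) l ^ 2 := by
        rw [mul_sum]
        refine sum_le_sum fun v _ => ?_
        rw [mul_left_comm]
        exact mul_le_mul_of_nonneg_left (hz v) (prod_nonneg fun t _ => hp0 (v t))
    _ = _ := by
        rw [sum_pi_prod_mul_sum_sq_sum_apply hp fun i => Γ *ᵥ y i]
        simp_rw [hΓy_sq, ← mulVec_smul, ← mulVec_sum, hy_mean, mul_assoc]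

theorem le_of_sparse_lower_bound_of_col_bound
    (hsparse : ∀ z : ι → ℝ, {i | z i ≠ 0}.ncard ≤ k → a * ∑ i, z i ^ 2 ≤ ∑ l, (Γ *ᵥ z) l ^ 2)
    (hcol : ∀ i, ∑ l, (Γ *ᵥ Pi.single i 1) l ^ 2 ≤ b)
    (hk : 1 ≤ k) (i : ι) : a ≤ b := by
  have h1 : {j | (Pi.single i 1 : ι → ℝ) j ≠ 0}.ncard ≤ 1 :=
    (Set.ncard_le_ncard Pi.support_single_subset).trans (Set.ncard_singleton i).le
  simpa [Pi.single_apply] using (hsparse _ (h1.trans hk)).trans (hcol i)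

theorem sub_mul_sq_sum_abs_le_of_sparse_lower_bound
    (hsparse : ∀ z : ι → ℝ, {i | z i ≠ 0}.ncard ≤ k → a * ∑ i, z i ^ 2 ≤ ∑ l, (Γ *ᵥ z) l ^ 2)
    (hcol : ∀ i, ∑ l, (Γ *ᵥ Pi.single i 1) l ^ 2 ≤ b)
    (hk : 0 < k) (x : ι → ℝ) :
    (a - b) * (∑ i, |x i|) ^ 2 ≤ (k - 1) * (∑ l, (Γ *ᵥ x) l ^ 2 - a * ∑ i, x i ^ 2) := by
  set L := ∑ i, |x i|
  rcases (sum_nonneg fun i _ => abs_nonneg (x i) : 0 ≤ L).eq_or_lt with hL | hL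
  · have hx0 : x = 0 := funext fun i => by
      simpa using (sum_eq_zero_iff_of_nonneg fun i _ => abs_nonneg (x i)).1 hL.symm i
    simp [hx0, show L = 0 from hL.symm]
  have hL0 : L ≠ 0 := hL.ne'
  set s : ι → ℝ := fun i => SignType.sign (x i)
  set p : ι → ℝ := fun i => |x i| / L
  have hps (i : ι) : p i * s i = x i / L := by
    simp only [p, s, div_mul_eq_mul_div, abs_mul_sign]
  have hps_sq (i : ι) : p i * s i ^ 2 = p i := by
    rw [sq, ← mul_assoc, hps]
    simp only [p, s, div_mul_eq_mul_div, mul_comm (x i), sign_mul_self]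
  have hp : ∑ i, p i = 1 := by simp only [p, ← sum_div]; exact div_self hL0
  have hcol_avg : ∑ i, p i * ∑ l, (Γ *ᵥ Pi.single i 1) l ^ 2 ≤ b :=
    calc _ ≤ ∑ i, p i * b :=
          sum_le_sum fun i _ => mul_le_mul_of_nonneg_left (hcol i) (by positivity)
      _ = b := by rw [← sum_mul, hp, one_mul]
  have hx_sq : ∑ i, (x i / L) ^ 2 = (∑ i, x i ^ 2) / L ^ 2 := by simp only [div_pow, sum_div]
  have hΓx_sq : ∑ l, (Γ *ᵥ fun i => x i / L) l ^ 2 = (∑ l, (Γ *ᵥ x) l ^ 2) / L ^ 2 := by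
    simp only [mulVec, dotProduct, mul_div_assoc', ← sum_div, div_pow]
  have havg := sparse_lower_bound_average Γ hsparse (fun i => by positivity) hp s
  simp_rw [hps_sq, hps, hp, hx_sq, hΓx_sq] at havg
  have hk' : (0 : ℝ) < k := by exact_mod_cast hk
  have hnorm : a - b ≤ (k - 1) * ((∑ l, (Γ *ᵥ x) l ^ 2) / L ^ 2 - a * ((∑ i, x i ^ 2) / L ^ 2)) :=
    le_of_mul_le_mul_left (by linarith [mul_le_mul_of_nonneg_left hcol_avg hk'.le]) hk'
  calc (a - b) * L ^ 2
      ≤ (k - 1) * ((∑ l, (Γ *ᵥ x) l ^ 2) / L ^ 2 - a * ((∑ i, x i ^ 2) / L ^ 2)) * L ^ 2 :=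
        mul_le_mul_of_nonneg_right hnorm (sq_nonneg L)
    _ = _ := by field_simp

end SparseLowerBound

theorem mul_le_of_sub_mul_le_mul_sub {a b K ρ M X Q : ℝ} (hK : 1 < K) (hρ : 0 < ρ) (hab : a ≤ b)
    (hρM : ρ ^ 2 * M ≤ X) (h : (a - b) * M ≤ (K - 1) * (Q - a * X)) :
    (a - (b - a) / (ρ ^ 2 * (K - 1))) * X ≤ Q := by
  have hK1 : 0 < K - 1 := by linarith
  have h2 : (a - b) * X ≤ ρ ^ 2 * ((a - b) * M) := by nlinarith
  rw [sub_mul, div_mul_eq_mul_div, sub_le_iff_le_add, ← sub_le_iff_le_add',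
    le_div_iff₀ (by positivity)]
  nlinarith

theorem weakenRIP_implies_robustWidth_l1_general
    {m n : ℕ} (Γ : Matrix (Fin m) (Fin n) ℝ)
    (k : ℕ) (hk1 : 1 < k)
    (α β : ℝ) (hα : 0 < α)
    (hRIPa : ∀ x : Fin n → ℝ, {i | x i ≠ 0}.ncard ≤ k →
      α * Real.sqrt (∑ i, x i ^ 2) ≤ Real.sqrt (∑ j, (Γ.mulVec x) j ^ 2))
    (hRIPb : ∀ i : Fin n, Real.sqrt (∑ j, (Γ.mulVec (Pi.single i 1)) j ^ 2) ≤ β)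
    (ρ : ℝ) (hρ : 0 < ρ) :
    ∀ x : Fin n → ℝ, ρ * (∑ i, |x i|) < Real.sqrt (∑ i, x i ^ 2) →
      (α ^ 2 - (β ^ 2 - α ^ 2) / (ρ ^ 2 * ((k : ℝ) - 1))) * (∑ i, x i ^ 2)
        ≤ ∑ j, (Γ.mulVec x) j ^ 2 := by
  intro x hx
  have hsparse (z : Fin n → ℝ) (hz : {i | z i ≠ 0}.ncard ≤ k) :
      α ^ 2 * ∑ i, z i ^ 2 ≤ ∑ l, (Γ *ᵥ z) l ^ 2 := by
    have h := hRIPa z hz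
    rwa [← Real.sqrt_sq hα.le, ← Real.sqrt_mul (sq_nonneg α),
      Real.sqrt_le_sqrt_iff (sum_nonneg fun l _ => sq_nonneg _)] at h
  have hcol (i : Fin n) : ∑ l, (Γ *ᵥ Pi.single i 1) l ^ 2 ≤ β ^ 2 :=
    (Real.sqrt_le_iff.1 (hRIPb i)).2
  have hρL : 0 ≤ ρ * ∑ i, |x i| := by positivity
  obtain ⟨i₀, -, -⟩ := exists_ne_zero_of_sum_ne_zero (Real.sqrt_pos.1 (hρL.trans_lt hx)).ne'
  refine mul_le_of_sub_mul_le_mul_sub (by exact_mod_cast hk1) hρ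
    (le_of_sparse_lower_bound_of_col_bound Γ hsparse hcol hk1.le i₀) ?_
    (sub_mul_sq_sum_abs_le_of_sparse_lower_bound Γ hsparse hcol (by omega) x)
  rw [← mul_pow]
  exact ((Real.lt_sqrt hρL).1 hx).le

/-- Weaken-RIP implies the robust width property over the ℓ1 norm. -/
theorem weakenRIP_implies_robustWidth_l1
    {m n : ℕ} (Γ : Matrix (Fin m) (Fin n) ℝ)
    (k : ℕ) (hk1 : 1 < k) (hkn : k ≤ n)
    (α β : ℝ) (hα : 0 < α) (hβ : 0 < β)
    (hRIPa : ∀ x : Fin n → ℝ, {i | x i ≠ 0}.ncard ≤ k →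
      α * Real.sqrt (∑ i, x i ^ 2) ≤ Real.sqrt (∑ j, (Γ.mulVec x) j ^ 2))
    (hRIPb : ∀ i : Fin n, Real.sqrt (∑ j, (Γ.mulVec (Pi.single i 1)) j ^ 2) ≤ β)
    (ρ : ℝ) (hρ : 0 < ρ) :
    ∀ x : Fin n → ℝ, ρ * (∑ i, |x i|) < Real.sqrt (∑ i, x i ^ 2) →
      (α ^ 2 - (β ^ 2 - α ^ 2) / (ρ ^ 2 * ((k : ℝ) - 1))) * (∑ i, x i ^ 2)
        ≤ ∑ j, (Γ.mulVec x) j ^ 2 :=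
  weakenRIP_implies_robustWidth_l1_general Γ k hk1 α β hα hRIPa hRIPb ρ hρ
end

section
/- Let H be a finite-dimensional real inner product space, B ⊆ H a set of atoms each of norm 1, k > 1 an integer, A the k-simple subset relative to B, and Φ : H → ℝ^m a linear map having the (k, α, β)-generalized-weaken-RIP for distortions α, β > 0. Let x ∈ H be nonzero and let x = ∑_{b∈S} σ_b b be any representation with S ⊆ B finite and σ_b ≥ 0, and set γ = ∑_{b∈S} σ_b. Then ‖Φx‖₂² ≥ α²‖x‖² − γ²(β² − α²)/(k−1). -/
open scoped BigOperators

/-!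
Normalize the coefficients to probability weights `p = σ / γ` and draw `k` atoms independently
from `p`. Their sum `Z` lies in the `k`-simple set, so `α²‖Z‖² ≤ ‖ΦZ‖²`. Taking expectations,
`E‖Z‖² = k(k-1)‖x/γ‖² + k` since the atoms have unit norm, while
`E‖ΦZ‖² = k(k-1)‖Φx/γ‖² + k E‖Φb‖² ≤ k(k-1)‖Φx/γ‖² + kβ²`; dividing by `k(k-1)` and rescaling by
`γ²` gives the bound.
-/

open Finset RealInnerProductSpace

namespace Maurey

variable {ι M : Type*} [Fintype ι] [AddCommGroup M] [Module ℝ M]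

/-- The expectation of `F` over `k` independent draws from the weights `p`. -/
noncomputable def tupleExpect (p : ι → ℝ) (k : ℕ) (F : (Fin k → ι) → M) : M :=
  ∑ f : Fin k → ι, (∏ l, p (f l)) • F f

theorem tupleExpect_zero (p : ι → ℝ) (F : (Fin 0 → ι) → M) :
    tupleExpect p 0 F = F Fin.elim0 := by
  simp [tupleExpect, Subsingleton.elim _ (Fin.elim0 : Fin 0 → ι)]

theorem tupleExpect_succ (p : ι → ℝ) (k : ℕ) (F : (Fin (k + 1) → ι) → M) :
    tupleExpect p (k + 1) F = ∑ a, p a • tupleExpect p k (fun g ↦ F (Fin.cons a g)) := by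
  simp only [tupleExpect, smul_sum, smul_smul, ← (Fin.consEquiv fun _ ↦ ι).sum_comp,
    Fintype.sum_prod_type, Fin.prod_univ_succ]
  rfl

theorem tupleExpect_add (p : ι → ℝ) (k : ℕ) (F G : (Fin k → ι) → M) :
    tupleExpect p k (fun f ↦ F f + G f) = tupleExpect p k F + tupleExpect p k G := by
  simp only [tupleExpect, smul_add, sum_add_distrib]

theorem tupleExpect_const {p : ι → ℝ} (hp : ∑ a, p a = 1) (k : ℕ) (c : M) :
    tupleExpect p k (fun _ ↦ c) = c := by
  induction k with
  | zero => simp [tupleExpect_zero]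
  | succ k ih => simp [tupleExpect_succ, ih, ← sum_smul, hp]

theorem tupleExpect_sum {p : ι → ℝ} (hp : ∑ a, p a = 1) (v : ι → M) (k : ℕ) :
    tupleExpect p k (fun f ↦ ∑ l, v (f l)) = (k : ℝ) • ∑ a, p a • v a := by
  induction k with
  | zero => simp [tupleExpect_zero]
  | succ k ih =>
    simp only [tupleExpect_succ, Fin.sum_univ_succ, Fin.cons_zero, Fin.cons_succ,
      tupleExpect_add, tupleExpect_const hp, ih, smul_add, sum_add_distrib, ← sum_smul, hp]
    push_cast
    module

theorem tupleExpect_mul_left (p : ι → ℝ) (k : ℕ) (c : ℝ) (F : (Fin k → ι) → ℝ) :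
    tupleExpect p k (fun f ↦ c * F f) = c * tupleExpect p k F := by
  simp only [tupleExpect, smul_eq_mul, mul_sum, mul_left_comm]

theorem tupleExpect_mono {p : ι → ℝ} (hp : ∀ a, 0 ≤ p a) {k : ℕ} {F G : (Fin k → ι) → ℝ}
    (hFG : ∀ f, F f ≤ G f) : tupleExpect p k F ≤ tupleExpect p k G :=
  sum_le_sum fun f _ ↦ smul_le_smul_of_nonneg_left (hFG f) (prod_nonneg fun l _ ↦ hp (f l))

variable {E F : Type*} [NormedAddCommGroup E] [InnerProductSpace ℝ E]
  [NormedAddCommGroup F] [InnerProductSpace ℝ F]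

theorem tupleExpect_inner (p : ι → ℝ) (k : ℕ) (w : E) (Z : (Fin k → ι) → E) :
    tupleExpect p k (fun f ↦ ⟪w, Z f⟫) = ⟪w, tupleExpect p k Z⟫ := by
  simp only [tupleExpect, inner_sum, inner_smul_right, smul_eq_mul]

theorem tupleExpect_norm_sq_sum {p : ι → ℝ} (hp : ∑ a, p a = 1) (v : ι → E) (k : ℕ) :
    tupleExpect p k (fun f ↦ ‖∑ l, v (f l)‖ ^ 2)
      = k * (k - 1) * ‖∑ a, p a • v a‖ ^ 2 + k * ∑ a, p a * ‖v a‖ ^ 2 := by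
  induction k with
  | zero => simp [tupleExpect_zero]
  | succ k ih =>
    set μ := ∑ a, p a • v a
    have hμ : ∑ a, p a * ⟪v a, μ⟫ = ‖μ‖ ^ 2 := by
      simp only [← real_inner_self_eq_norm_sq, μ, sum_inner, real_inner_smul_left]
    have step : ∀ a, tupleExpect p k (fun g ↦ ‖v a + ∑ l, v (g l)‖ ^ 2)
        = ‖v a‖ ^ 2 + 2 * k * ⟪v a, μ⟫ + tupleExpect p k (fun f ↦ ‖∑ l, v (f l)‖ ^ 2) := by
      intro a
      simp only [norm_add_sq_real, tupleExpect_add, tupleExpect_const hp, tupleExpect_mul_left,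
        tupleExpect_inner, tupleExpect_sum hp, real_inner_smul_right, μ]
      ring
    simp only [tupleExpect_succ, Fin.sum_univ_succ, Fin.cons_zero, Fin.cons_succ, step, ih,
      smul_eq_mul, mul_add, sum_add_distrib, ← sum_mul, hp, mul_left_comm (p _), ← mul_sum, hμ]
    push_cast
    ring

theorem le_norm_map_sq_of_sum_eq_one {p : ι → ℝ} (hp0 : ∀ a, 0 ≤ p a) (hp1 : ∑ a, p a = 1)
    {v : ι → E} (hv : ∀ a, ‖v a‖ = 1) (Φ : E →ₗ[ℝ] F) {k : ℕ} (hk : 1 < k) {α β : ℝ}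
    (hsample : ∀ f : Fin k → ι, α ^ 2 * ‖∑ l, v (f l)‖ ^ 2 ≤ ‖Φ (∑ l, v (f l))‖ ^ 2)
    (hβ : ∀ a, ‖Φ (v a)‖ ≤ β) :
    α ^ 2 * ‖∑ a, p a • v a‖ ^ 2 - (β ^ 2 - α ^ 2) / (k - 1) ≤ ‖Φ (∑ a, p a • v a)‖ ^ 2 := by
  have hmean := tupleExpect_mono hp0 hsample
  simp only [map_sum, map_smul] at hmean ⊢
  rw [tupleExpect_mul_left, tupleExpect_norm_sq_sum hp1,
    tupleExpect_norm_sq_sum hp1 fun a ↦ Φ (v a)] at hmean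
  have hdiag : ∑ a, p a * ‖v a‖ ^ 2 = 1 := by simp [hv, hp1]
  have hdiagΦ : ∑ a, p a * ‖Φ (v a)‖ ^ 2 ≤ β ^ 2 := calc
    ∑ a, p a * ‖Φ (v a)‖ ^ 2 ≤ ∑ a, p a * β ^ 2 := by
      gcongr with a; exacts [hp0 a, hβ a]
    _ = β ^ 2 := by rw [← sum_mul, hp1, one_mul]
  have hk1 : (1 : ℝ) < k := by exact_mod_cast hk
  rw [hdiag] at hmean
  rw [sub_le_comm, le_div_iff₀ (by linarith)]
  nlinarith

theorem le_norm_map_sq_of_nonneg {σ : ι → ℝ} (hσ : ∀ a, 0 ≤ σ a)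
    {v : ι → E} (hv : ∀ a, ‖v a‖ = 1) (Φ : E →ₗ[ℝ] F) {k : ℕ} (hk : 1 < k) {α β : ℝ}
    (hsample : ∀ f : Fin k → ι, α ^ 2 * ‖∑ l, v (f l)‖ ^ 2 ≤ ‖Φ (∑ l, v (f l))‖ ^ 2)
    (hβ : ∀ a, ‖Φ (v a)‖ ≤ β) :
    α ^ 2 * ‖∑ a, σ a • v a‖ ^ 2 - (∑ a, σ a) ^ 2 * (β ^ 2 - α ^ 2) / (k - 1)
      ≤ ‖Φ (∑ a, σ a • v a)‖ ^ 2 := by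
  set γ := ∑ a, σ a
  have hγ0 : 0 ≤ γ := sum_nonneg fun a _ ↦ hσ a
  obtain hγ | hγ := hγ0.eq_or_lt
  · obtain rfl : σ = 0 := (Fintype.sum_eq_zero_iff_of_nonneg hσ).mp hγ.symm
    simp [γ]
  have hscale : ∑ a, σ a • v a = γ • ∑ a, (σ a / γ) • v a := by
    simp only [smul_sum, smul_smul, mul_div_cancel₀ _ hγ.ne']
  have hp1 : ∑ a, σ a / γ = 1 := by rw [← sum_div, div_self hγ.ne']
  have h := le_norm_map_sq_of_sum_eq_one (fun a ↦ div_nonneg (hσ a) hγ.le) hp1 hv Φ hk hsample hβ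
  rw [hscale, map_smul, norm_smul, norm_smul, Real.norm_of_nonneg hγ.le]
  calc α ^ 2 * (γ * ‖∑ a, (σ a / γ) • v a‖) ^ 2 - γ ^ 2 * (β ^ 2 - α ^ 2) / (k - 1)
      = γ ^ 2 * (α ^ 2 * ‖∑ a, (σ a / γ) • v a‖ ^ 2 - (β ^ 2 - α ^ 2) / (k - 1)) := by ring
    _ ≤ γ ^ 2 * ‖Φ (∑ a, (σ a / γ) • v a)‖ ^ 2 := by gcongr
    _ = (γ * ‖Φ (∑ a, (σ a / γ) • v a)‖) ^ 2 := by ring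

end Maurey

theorem maurey_inequality_unit_atoms_general
    {H : Type*} [NormedAddCommGroup H] [InnerProductSpace ℝ H]
    {m : ℕ} (B : Set H) (hBunit : ∀ b ∈ B, ‖b‖ = 1)
    (k : ℕ) (hk : 1 < k) (α β : ℝ) (hα : 0 < α)
    (Φ : H →ₗ[ℝ] EuclideanSpace ℝ (Fin m))
    (hRIPa : ∀ u ∈ simpleSet B k, α * ‖u‖ ≤ ‖Φ u‖)
    (hRIPb : ∀ b ∈ B, ‖Φ b‖ ≤ β)
    (x : H)
    (S : Finset H) (σ : H → ℝ) (hSB : ↑S ⊆ B) (hσ : ∀ b ∈ S, 0 ≤ σ b)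
    (hrep : x = ∑ b ∈ S, σ b • b) :
    α ^ 2 * ‖x‖ ^ 2 - (∑ b ∈ S, σ b) ^ 2 * (β ^ 2 - α ^ 2) / ((k : ℝ) - 1)
      ≤ ‖Φ x‖ ^ 2 := by
  have hsample (f : Fin k → S) :
      α ^ 2 * ‖∑ l, (f l : H)‖ ^ 2 ≤ ‖Φ (∑ l, (f l : H))‖ ^ 2 := by
    have hmem : ∑ l, (f l : H) ∈ simpleSet B k :=
      ⟨fun _ ↦ 1, fun l ↦ f l, fun _ ↦ zero_le_one, fun l ↦ hSB (f l).2, by simp⟩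
    rw [← mul_pow]
    exact pow_le_pow_left₀ (by positivity) (hRIPa _ hmem) 2
  have h := Maurey.le_norm_map_sq_of_nonneg (σ := fun b : S ↦ σ b) (fun b ↦ hσ b b.2)
    (v := fun b : S ↦ (b : H)) (fun b ↦ hBunit b (hSB b.2)) Φ hk hsample
    (fun b ↦ hRIPb b (hSB b.2))
  rwa [sum_coe_sort S σ, sum_coe_sort S fun b ↦ σ b • b, ← hrep] at h

/-- With unit-norm atoms and the weaken-RIP, for any nonnegative representation of `x`,
`‖Φx‖² ≥ α²‖x‖² − γ²(β² − α²)/(k−1)` where `γ` is the sum of the coefficients. -/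
theorem maurey_inequality_unit_atoms
    {H : Type*} [NormedAddCommGroup H] [InnerProductSpace ℝ H] [FiniteDimensional ℝ H]
    {m : ℕ} (B : Set H) (hBunit : ∀ b ∈ B, ‖b‖ = 1)
    (k : ℕ) (hk : 1 < k) (α β : ℝ) (hα : 0 < α) (hβ : 0 < β)
    (Φ : H →ₗ[ℝ] EuclideanSpace ℝ (Fin m))
    (hRIPa : ∀ u ∈ simpleSet B k, α * ‖u‖ ≤ ‖Φ u‖)
    (hRIPb : ∀ b ∈ B, ‖Φ b‖ ≤ β)
    (x : H) (hx : x ≠ 0)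
    (S : Finset H) (σ : H → ℝ) (hSB : ↑S ⊆ B) (hσ : ∀ b ∈ S, 0 ≤ σ b)
    (hrep : x = ∑ b ∈ S, σ b • b) :
    α ^ 2 * ‖x‖ ^ 2 - (∑ b ∈ S, σ b) ^ 2 * (β ^ 2 - α ^ 2) / ((k : ℝ) - 1)
      ≤ ‖Φ x‖ ^ 2 :=
  maurey_inequality_unit_atoms_general B hBunit k hk α β hα Φ hRIPa hRIPb x S σ hSB hσ hrep
end

section
/- Let H be a finite-dimensional real inner product space, B a set of unit-norm atoms that is centrally symmetric and spanning, k > 1 an integer, A the k-simple subset relative to B, and Φ : H → ℝ^m a linear map having the (k, α, β)-generalized-weaken-RIP for distortions α, β > 0. Then for every x ∈ H, ‖Φx‖₂² ≥ α²‖x‖² − ‖x‖_B² (β² − α²)/(k−1), where ‖·‖_B is the atom norm induced by B. -/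
/-! Write `x = ∑ σ_b b` with `∑ σ_b = 1` and draw `k` atoms independently with law `σ`, so that
a tuple `f` of atoms has probability `∏ j, σ (f j)`. The sum `u` of the draws lies in
the `k`-simple set, so `α²‖u‖² ≤ ‖Φu‖²`. Averaging with `E‖Ψu‖² = k E‖Ψb‖² + k(k-1)‖Ψx‖²`, for
`Ψ = id` and `Ψ = Φ`, gives `α²(k + k(k-1)‖x‖²) ≤ kβ² + k(k-1)‖Φx‖²`. The bound is homogeneous of
degree two in `(x, ∑ σ_b)` and a closed condition on `∑ σ_b`, so it passes to the infimum
`‖x‖_B`. -/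

open scoped BigOperators

section TupleMoments

variable {ι : Type*} [Fintype ι]

theorem Fin.sum_univ_pi_cons {M : Type*} [AddCommMonoid M] (k : ℕ) (F : (Fin (k + 1) → ι) → M) :
    ∑ f, F f = ∑ i, ∑ g : Fin k → ι, F (Fin.cons i g) := by
  rw [← (Fin.consEquiv fun _ => ι).sum_comp, Fintype.sum_prod_type]
  rfl

variable {w : ι → ℝ}

theorem sum_tuple_weights (hw : ∑ i, w i = 1) (k : ℕ) : ∑ f : Fin k → ι, ∏ j, w (f j) = 1 := by
  rw [← Fintype.sum_pow, hw, one_pow]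

theorem sum_tuple_weights_smul_sum {M : Type*} [AddCommGroup M] [Module ℝ M]
    (hw : ∑ i, w i = 1) (v : ι → M) (k : ℕ) :
    ∑ f : Fin k → ι, (∏ j, w (f j)) • ∑ j, v (f j) = (k : ℝ) • ∑ i, w i • v i := by
  induction k with
  | zero => simp
  | succ k ih =>
    simp only [Fin.sum_univ_pi_cons, Fin.prod_univ_succ, Fin.sum_univ_succ, Fin.cons_zero,
      Fin.cons_succ, smul_add, mul_smul, ← Finset.smul_sum, ← Finset.sum_smul, ih,
      sum_tuple_weights hw, one_smul, Finset.sum_add_distrib]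
    rw [hw, one_smul, Nat.cast_succ, add_smul, one_smul, add_comm]

theorem sum_tuple_weights_mul_norm_sq_sum {E : Type*} [NormedAddCommGroup E]
    [InnerProductSpace ℝ E] (hw : ∑ i, w i = 1) (v : ι → E) (k : ℕ) :
    ∑ f : Fin k → ι, (∏ j, w (f j)) * ‖∑ j, v (f j)‖ ^ 2
      = k * ∑ i, w i * ‖v i‖ ^ 2 + k * (k - 1) * ‖∑ i, w i • v i‖ ^ 2 := by
  induction k with
  | zero => simp
  | succ k ih =>
    have diag : ∑ i, ∑ g : Fin k → ι, w i * (∏ j, w (g j)) * ‖v i‖ ^ 2 = ∑ i, w i * ‖v i‖ ^ 2 := by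
      simp only [← Finset.sum_mul, ← Finset.mul_sum, sum_tuple_weights hw, mul_one]
    have cross : ∑ i, ∑ g : Fin k → ι, w i * (∏ j, w (g j)) * (2 * inner ℝ (v i) (∑ j, v (g j)))
        = 2 * k * ‖∑ i, w i • v i‖ ^ 2 := by
      calc _ = 2 * ∑ i, w i * inner ℝ (v i) (∑ g : Fin k → ι, (∏ j, w (g j)) • ∑ j, v (g j)) := by
            simp only [inner_sum, real_inner_smul_right, Finset.mul_sum]
            ring_nf
        _ = 2 * inner ℝ (∑ i, w i • v i) ((k : ℝ) • ∑ i, w i • v i) := by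
            simp only [sum_tuple_weights_smul_sum hw, sum_inner, real_inner_smul_left]
        _ = _ := by rw [real_inner_smul_right, real_inner_self_eq_norm_sq, mul_assoc]
    have tail : ∑ i, ∑ g : Fin k → ι, w i * (∏ j, w (g j)) * ‖∑ j, v (g j)‖ ^ 2
        = ∑ g : Fin k → ι, (∏ j, w (g j)) * ‖∑ j, v (g j)‖ ^ 2 := by
      simp only [mul_assoc, ← Finset.mul_sum, ← Finset.sum_mul, hw, one_mul]
    simp only [Fin.sum_univ_pi_cons, Fin.prod_univ_succ, Fin.sum_univ_succ, Fin.cons_zero,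
      Fin.cons_succ, norm_add_sq_real, mul_add, Finset.sum_add_distrib]
    rw [diag, cross, tail, ih]
    push_cast
    ring

end TupleMoments

section WeakenRIP

variable {H E : Type*} [NormedAddCommGroup H] [InnerProductSpace ℝ H]
  [NormedAddCommGroup E] [InnerProductSpace ℝ E]
  {B : Set H} {k : ℕ} {α β : ℝ} {Φ : H →ₗ[ℝ] E}

theorem weakenRIP_bound_of_sum_weights_eq_one (hBunit : ∀ b ∈ B, ‖b‖ = 1) (hk : 0 < k)
    (hα : 0 ≤ α) (hRIPa : ∀ u ∈ simpleSet B k, α * ‖u‖ ≤ ‖Φ u‖) (hRIPb : ∀ b ∈ B, ‖Φ b‖ ≤ β)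
    {ι : Type*} [Fintype ι] (a : ι → H) (ha : ∀ i, a i ∈ B) (w : ι → ℝ) (hw0 : ∀ i, 0 ≤ w i)
    (hw : ∑ i, w i = 1) :
    ((k : ℝ) - 1) * (α ^ 2 * ‖∑ i, w i • a i‖ ^ 2 - ‖Φ (∑ i, w i • a i)‖ ^ 2) ≤ β ^ 2 - α ^ 2 := by
  have hsimple (f : Fin k → ι) : α ^ 2 * ‖∑ j, a (f j)‖ ^ 2 ≤ ‖Φ (∑ j, a (f j))‖ ^ 2 := by
    have hu : ∑ j, a (f j) ∈ simpleSet B k :=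
      ⟨1, a ∘ f, fun _ => zero_le_one, fun j => ha _, by simp⟩
    rw [← mul_pow]
    exact pow_le_pow_left₀ (by positivity) (hRIPa _ hu) 2
  have hmean : α ^ 2 * ∑ f : Fin k → ι, (∏ j, w (f j)) * ‖∑ j, a (f j)‖ ^ 2
      ≤ ∑ f : Fin k → ι, (∏ j, w (f j)) * ‖Φ (∑ j, a (f j))‖ ^ 2 := by
    rw [Finset.mul_sum]
    refine Finset.sum_le_sum fun f _ => ?_
    rw [mul_left_comm]
    exact mul_le_mul_of_nonneg_left (hsimple f) (Finset.prod_nonneg fun j _ => hw0 (f j))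
  have hmoment : ∑ f : Fin k → ι, (∏ j, w (f j)) * ‖∑ j, a (f j)‖ ^ 2
      = k + k * (k - 1) * ‖∑ i, w i • a i‖ ^ 2 := by
    simp only [sum_tuple_weights_mul_norm_sq_sum hw, hBunit _ (ha _), one_pow, mul_one, hw]
  have hΦmoment : ∑ f : Fin k → ι, (∏ j, w (f j)) * ‖Φ (∑ j, a (f j))‖ ^ 2
      = k * ∑ i, w i * ‖Φ (a i)‖ ^ 2 + k * (k - 1) * ‖Φ (∑ i, w i • a i)‖ ^ 2 := by
    simp only [map_sum, map_smul]
    exact sum_tuple_weights_mul_norm_sq_sum hw (fun i => Φ (a i)) k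
  have hB : ∑ i, w i * ‖Φ (a i)‖ ^ 2 ≤ β ^ 2 := by
    calc _ ≤ ∑ i, w i * β ^ 2 := Finset.sum_le_sum fun i _ => mul_le_mul_of_nonneg_left
            (pow_le_pow_left₀ (norm_nonneg _) (hRIPb _ (ha i)) 2) (hw0 i)
      _ = β ^ 2 := by rw [← Finset.sum_mul, hw, one_mul]
  rw [hmoment, hΦmoment] at hmean
  have hk' : (0 : ℝ) < k := by exact_mod_cast hk
  nlinarith

theorem weakenRIP_bound_of_eq_sum_smul (hBunit : ∀ b ∈ B, ‖b‖ = 1) (hk : 1 < k)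
    (hα : 0 ≤ α) (hRIPa : ∀ u ∈ simpleSet B k, α * ‖u‖ ≤ ‖Φ u‖) (hRIPb : ∀ b ∈ B, ‖Φ b‖ ≤ β)
    {S : Finset H} {σ : H → ℝ} (hSB : ↑S ⊆ B) (hσ : ∀ b ∈ S, 0 ≤ σ b) :
    α ^ 2 * ‖∑ b ∈ S, σ b • b‖ ^ 2 - ‖Φ (∑ b ∈ S, σ b • b)‖ ^ 2
      ≤ (∑ b ∈ S, σ b) ^ 2 * (β ^ 2 - α ^ 2) / ((k : ℝ) - 1) := by
  set T := ∑ b ∈ S, σ b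
  set x := ∑ b ∈ S, σ b • b
  obtain hT | hT : 0 = T ∨ 0 < T := (Finset.sum_nonneg hσ).eq_or_lt
  · have hx : x = 0 := Finset.sum_eq_zero fun b hb => by
      rw [(Finset.sum_eq_zero_iff_of_nonneg hσ).1 hT.symm b hb, zero_smul]
    simp [hx, ← hT]
  have hnormalized := weakenRIP_bound_of_sum_weights_eq_one hBunit (by omega) hα hRIPa hRIPb
    ((↑) : S → H) (fun b => hSB b.2) (fun b => σ b / T) (fun b => div_nonneg (hσ _ b.2) hT.le)
    (by rw [← Finset.sum_div, Finset.sum_coe_sort S σ, div_self hT.ne'])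
  have hx : ∑ b : S, (σ b / T) • (b : H) = T⁻¹ • x := by
    simp only [div_eq_inv_mul, mul_smul, ← Finset.smul_sum]
    rw [Finset.sum_coe_sort S fun b => σ b • b]
  rw [hx, map_smul, norm_smul, norm_smul, Real.norm_of_nonneg (inv_nonneg.2 hT.le)] at hnormalized
  have hk' : (0 : ℝ) < k - 1 := by
    rw [sub_pos]; exact_mod_cast hk
  rw [le_div_iff₀ hk']
  have hscale : (α ^ 2 * ‖x‖ ^ 2 - ‖Φ x‖ ^ 2) * (k - 1)
      = T ^ 2 * ((k - 1) * (α ^ 2 * (T⁻¹ * ‖x‖) ^ 2 - (T⁻¹ * ‖Φ x‖) ^ 2)) := by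
    field_simp [hT.ne']
  rw [hscale]
  exact mul_le_mul_of_nonneg_left hnormalized (sq_nonneg T)

end WeakenRIP

theorem atomNorm_mem_of_isClosed {H : Type*} [AddCommGroup H] [Module ℝ H] {B : Set H}
    (hB : Spans B) (x : H) {C : Set ℝ} (hC : IsClosed C)
    (h : ∀ (S : Finset H) (σ : H → ℝ), ↑S ⊆ B → (∀ b ∈ S, 0 ≤ σ b) →
      x = ∑ b ∈ S, σ b • b → ∑ b ∈ S, σ b ∈ C) :
    atomNorm B x ∈ C := by
  obtain ⟨S, σ, hSB, hσ, hx⟩ := hB x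
  refine closure_minimal ?_ hC (csInf_mem_closure ⟨_, S, σ, hSB, hσ, hx, rfl⟩ ⟨0, ?_⟩)
  · rintro r ⟨S, σ, hSB, hσ, hx, rfl⟩
    exact h S σ hSB hσ hx
  · rintro r ⟨S, σ, -, hσ, -, rfl⟩
    exact Finset.sum_nonneg hσ

theorem weakenRIP_atomNorm_lower_bound_general
    {H : Type*} [NormedAddCommGroup H] [InnerProductSpace ℝ H]
    {m : ℕ} (B : Set H)
    (hBspan : Spans B) (hBunit : ∀ b ∈ B, ‖b‖ = 1)
    (k : ℕ) (hk : 1 < k) (α β : ℝ) (hα : 0 < α)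
    (Φ : H →ₗ[ℝ] EuclideanSpace ℝ (Fin m))
    (hRIPa : ∀ u ∈ simpleSet B k, α * ‖u‖ ≤ ‖Φ u‖)
    (hRIPb : ∀ b ∈ B, ‖Φ b‖ ≤ β) :
    ∀ x : H,
      α ^ 2 * ‖x‖ ^ 2 - atomNorm B x ^ 2 * (β ^ 2 - α ^ 2) / ((k : ℝ) - 1)
        ≤ ‖Φ x‖ ^ 2 := by
  intro x
  refine atomNorm_mem_of_isClosed hBspan x
    (C := {r | α ^ 2 * ‖x‖ ^ 2 - r ^ 2 * (β ^ 2 - α ^ 2) / ((k : ℝ) - 1) ≤ ‖Φ x‖ ^ 2})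
    (isClosed_le (by fun_prop) continuous_const) ?_
  rintro S σ hSB hσ rfl
  have := weakenRIP_bound_of_eq_sum_smul hBunit hk hα.le hRIPa hRIPb hSB hσ
  simp only [Set.mem_ofPred_eq]
  linarith

/-- Under the generalized weaken-RIP,
`‖Φx‖² ≥ α²‖x‖² − ‖x‖_B²(β² − α²)/(k−1)` for every `x`. -/
theorem weakenRIP_atomNorm_lower_bound
    {H : Type*} [NormedAddCommGroup H] [InnerProductSpace ℝ H] [FiniteDimensional ℝ H]
    {m : ℕ} (B : Set H)
    (hBsym : ∀ b ∈ B, -b ∈ B) (hBspan : Spans B) (hBunit : ∀ b ∈ B, ‖b‖ = 1)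
    (k : ℕ) (hk : 1 < k) (α β : ℝ) (hα : 0 < α) (hβ : 0 < β)
    (Φ : H →ₗ[ℝ] EuclideanSpace ℝ (Fin m))
    (hRIPa : ∀ u ∈ simpleSet B k, α * ‖u‖ ≤ ‖Φ u‖)
    (hRIPb : ∀ b ∈ B, ‖Φ b‖ ≤ β) :
    ∀ x : H,
      α ^ 2 * ‖x‖ ^ 2 - atomNorm B x ^ 2 * (β ^ 2 - α ^ 2) / ((k : ℝ) - 1)
        ≤ ‖Φ x‖ ^ 2 :=
  weakenRIP_atomNorm_lower_bound_general B hBspan hBunit k hk α β hα Φ hRIPa hRIPb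
end

section
/- Let Γ ∈ ℝ^{m×n} be a matrix having the (k, α, β)-weaken-RIP for an integer k with 1 < k ≤ n and distortions α, β > 0. Then for every x ∈ ℝⁿ, ‖Γx‖₂² ≥ α²‖x‖₂² − ‖x‖₁² (β² − α²)/(k−1). -/
/-! Maurey's empirical method. Put `Q y = ‖Γ y‖² - α² ‖y‖²` and `L = ‖x‖₁ > 0`, and write
`x = ∑ pᵢ vᵢ` with probabilities `pᵢ = |xᵢ| / L` and `vᵢ = ± L eᵢ`. Drawing `k` indices
independently from `p` (the tuple `f` has probability `∏ s, p (f s)`), the sum `z` of the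
chosen `vᵢ` is `k`-sparse, so `Q z ≥ 0`; on the other hand the expectation of `Q z` is
`k ∑ pᵢ Q vᵢ + k (k - 1) Q x ≤ k L² (β² - α²) + k (k - 1) Q x`. -/

open Finset Matrix

theorem sum_pi_fin_succ {ι N : Type*} [Fintype ι] [AddCommMonoid N] {k : ℕ}
    (F : (Fin (k + 1) → ι) → N) :
    ∑ f, F f = ∑ a, ∑ g : Fin k → ι, F (Fin.cons a g) := by
  rw [← (Fin.consEquiv fun _ => ι).sum_comp, Fintype.sum_prod_type]
  rfl

section Sampling

variable {R M ι : Type*} [CommRing R] [AddCommGroup M] [Module R M] [Fintype ι]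
  {p : ι → R}

theorem sum_prod_tuple_eq_one (hp : ∑ i, p i = 1) (k : ℕ) :
    ∑ f : Fin k → ι, ∏ s, p (f s) = 1 := by
  induction k with
  | zero => simp
  | succ k ih =>
    simp only [sum_pi_fin_succ, Fin.prod_univ_succ, Fin.cons_zero, Fin.cons_succ, ← mul_sum, ih,
      mul_one, hp]

theorem sum_prod_smul_sum_tuple (hp : ∑ i, p i = 1) (v : ι → M) (k : ℕ) :
    ∑ f : Fin k → ι, (∏ s, p (f s)) • ∑ s, v (f s) = (k : R) • ∑ i, p i • v i := by
  induction k with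
  | zero => simp
  | succ k ih =>
    simp only [sum_pi_fin_succ, Fin.prod_univ_succ, Fin.sum_univ_succ, Fin.cons_zero,
      Fin.cons_succ, smul_add, sum_add_distrib, mul_smul, ← smul_sum, ← sum_smul,
      sum_prod_tuple_eq_one hp, one_smul, ih, hp, Nat.cast_succ, add_smul]
    abel

theorem sum_prod_mul_bilin_sum_tuple (hp : ∑ i, p i = 1) (B : LinearMap.BilinForm R M)
    (v : ι → M) (k : ℕ) :
    ∑ f : Fin k → ι, (∏ s, p (f s)) * B (∑ s, v (f s)) (∑ s, v (f s)) =
      k * ∑ i, p i * B (v i) (v i) + k * (k - 1) * B (∑ i, p i • v i) (∑ i, p i • v i) := by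
  induction k with
  | zero => simp
  | succ k ih =>
    have hmean (φ : M →ₗ[R] R) : ∑ a, p a * φ (v a) = φ (∑ i, p i • v i) := by
      simp [map_sum]
    have hmean_flip (w : M) : ∑ a, p a * B (v a) w = B (∑ i, p i • v i) w := hmean (B.flip w)
    have hsample (φ : M →ₗ[R] R) : ∑ g : Fin k → ι, (∏ s, p (g s)) * φ (∑ s, v (g s)) =
        k * φ (∑ i, p i • v i) := by
      simp_rw [← smul_eq_mul, ← map_smul, ← map_sum, sum_prod_smul_sum_tuple hp]
    have hsample_flip (w : M) : ∑ g : Fin k → ι, (∏ s, p (g s)) * B (∑ s, v (g s)) w =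
        k * B (∑ i, p i • v i) w := hsample (B.flip w)
    simp only [sum_pi_fin_succ, Fin.prod_univ_succ, Fin.sum_univ_succ, Fin.cons_zero,
      Fin.cons_succ, map_add, LinearMap.add_apply, mul_add, sum_add_distrib, mul_assoc,
      ← mul_sum, fun w => hsample (B w), hsample_flip, ih]
    simp only [← sum_mul, sum_prod_tuple_eq_one hp, one_mul, mul_left_comm (p _), ← mul_sum,
      hmean (B _), hmean_flip, hp]
    push_cast
    ring

end Sampling

theorem Matrix.toBilin'_transpose_mul_sub_smul_one_apply_self {m n : Type*} [Fintype m]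
    [Fintype n] [DecidableEq n] (Γ : Matrix m n ℝ) (a : ℝ) (y : n → ℝ) :
    toBilin' (Γᵀ * Γ - a • 1) y y = ∑ j, (Γ *ᵥ y) j ^ 2 - a * ∑ i, y i ^ 2 := by
  rw [toBilin'_apply', sub_mulVec, dotProduct_sub, ← mulVec_mulVec, dotProduct_mulVec,
    vecMul_transpose, smul_mulVec, one_mulVec, dotProduct_smul]
  simp only [dotProduct, sq, smul_eq_mul]

theorem ncard_support_sum_single_le {ι R : Type*} [DecidableEq ι] [AddCommMonoid R] {k : ℕ}
    (f : Fin k → ι) (c : Fin k → R) :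
    {i | (∑ s, Pi.single (f s) (c s) : ι → R) i ≠ 0}.ncard ≤ k := by
  have hsub : {i | (∑ s, Pi.single (f s) (c s) : ι → R) i ≠ 0} ⊆ Set.range f := by
    intro i hi
    by_contra hf
    refine hi ?_
    rw [Finset.sum_apply]
    exact Finset.sum_eq_zero fun s _ => Pi.single_eq_of_ne (fun h => hf ⟨s, h.symm⟩) _
  calc _ ≤ (Set.range f).ncard := Set.ncard_le_ncard hsub (Set.finite_range f)
    _ ≤ (Set.univ : Set (Fin k)).ncard := by rw [← Set.image_univ]; exact Set.ncard_image_le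
    _ = k := by simp

theorem exists_sq_eq_one_mul_abs_eq (a : ℝ) : ∃ σ : ℝ, σ ^ 2 = 1 ∧ σ * |a| = a := by
  rcases le_or_gt 0 a with ha | ha
  · exact ⟨1, by simp [abs_of_nonneg ha]⟩
  · exact ⟨-1, by simp [abs_of_neg ha]⟩

theorem neg_sq_sum_abs_mul_le_of_sparse_nonneg {ι : Type*} [Fintype ι] [DecidableEq ι]
    (B : LinearMap.BilinForm ℝ (ι → ℝ)) {k : ℕ} (hk : 0 < k) {c : ℝ}
    (hsparse : ∀ y : ι → ℝ, {i | y i ≠ 0}.ncard ≤ k → 0 ≤ B y y)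
    (hdiag : ∀ i, B (Pi.single i 1) (Pi.single i 1) ≤ c) (x : ι → ℝ) :
    -((∑ i, |x i|) ^ 2 * c) ≤ ((k : ℝ) - 1) * B x x := by
  set L := ∑ i, |x i|
  rcases (sum_nonneg fun i _ => abs_nonneg (x i) : 0 ≤ L).eq_or_lt with hL | hL
  · have hx : x = 0 := funext fun i => abs_eq_zero.mp <|
      (sum_eq_zero_iff_of_nonneg fun i _ => abs_nonneg (x i)).mp hL.symm i (mem_univ i)
    subst hx
    simp [L]
  choose σ hσ_sq hσ_abs using fun i => exists_sq_eq_one_mul_abs_eq (x i)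
  set p : ι → ℝ := fun i => |x i| / L
  set v : ι → ι → ℝ := fun i => Pi.single i (L * σ i)
  have hp : ∑ i, p i = 1 := by rw [← sum_div, div_self hL.ne']
  have hx : ∑ i, p i • v i = x := by
    conv_rhs => rw [← univ_sum_single x]
    refine sum_congr rfl fun i _ => ?_
    rw [← Pi.single_smul', smul_eq_mul, ← hσ_abs i, ← mul_assoc, div_mul_cancel₀ _ hL.ne',
      mul_comm]
  have hv (i : ι) : B (v i) (v i) = L ^ 2 * B (Pi.single i 1) (Pi.single i 1) := by
    have : v i = (L * σ i) • Pi.single i 1 := by rw [← Pi.single_smul', smul_eq_mul, mul_one]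
    rw [this, LinearMap.map_smul₂, map_smul, smul_eq_mul, smul_eq_mul, ← mul_assoc, ← sq,
      mul_pow, hσ_sq, mul_one]
  have hD : ∑ i, p i * B (v i) (v i) ≤ L ^ 2 * c := calc
    _ ≤ ∑ i, p i * (L ^ 2 * c) := by
      simp only [hv]
      gcongr with i
      exact hdiag i
    _ = L ^ 2 * c := by rw [← sum_mul, hp, one_mul]
  have hW : 0 ≤ (k : ℝ) * (∑ i, p i * B (v i) (v i) + (k - 1) * B x x) := by
    rw [mul_add, ← mul_assoc, ← hx, ← sum_prod_mul_bilin_sum_tuple hp]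
    exact sum_nonneg fun f _ => mul_nonneg (prod_nonneg fun s _ => by positivity)
      (hsparse _ (ncard_support_sum_single_le f _))
  have := (mul_nonneg_iff_of_pos_left (by exact_mod_cast hk)).mp hW
  linarith

theorem sq_mul_le_of_mul_sqrt_le_sqrt {α a b : ℝ} (hα : 0 ≤ α) (hb : 0 ≤ b)
    (h : α * √a ≤ √b) : α ^ 2 * a ≤ b := by
  rwa [← Real.sqrt_sq hα, ← Real.sqrt_mul (sq_nonneg α), Real.sqrt_le_sqrt_iff hb] at h

theorem weakenRIP_lower_bound_l1_general
    {m n : ℕ} (Γ : Matrix (Fin m) (Fin n) ℝ)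
    (k : ℕ) (hk1 : 1 < k)
    (α β : ℝ) (hα : 0 < α)
    (hRIPa : ∀ x : Fin n → ℝ, {i | x i ≠ 0}.ncard ≤ k →
      α * Real.sqrt (∑ i, x i ^ 2) ≤ Real.sqrt (∑ j, (Γ.mulVec x) j ^ 2))
    (hRIPb : ∀ i : Fin n, Real.sqrt (∑ j, (Γ.mulVec (Pi.single i 1)) j ^ 2) ≤ β) :
    ∀ x : Fin n → ℝ,
      α ^ 2 * (∑ i, x i ^ 2) - (∑ i, |x i|) ^ 2 * (β ^ 2 - α ^ 2) / ((k : ℝ) - 1)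
        ≤ ∑ j, (Γ.mulVec x) j ^ 2 := by
  intro x
  have hB := toBilin'_transpose_mul_sub_smul_one_apply_self Γ (α ^ 2)
  have hsparse (y : Fin n → ℝ) (hy : {i | y i ≠ 0}.ncard ≤ k) :
      0 ≤ toBilin' (Γᵀ * Γ - α ^ 2 • 1) y y := by
    rw [hB, sub_nonneg]
    exact sq_mul_le_of_mul_sqrt_le_sqrt hα.le (by positivity) (hRIPa y hy)
  have hdiag (i : Fin n) :
      toBilin' (Γᵀ * Γ - α ^ 2 • 1) (Pi.single i 1) (Pi.single i 1) ≤ β ^ 2 - α ^ 2 := by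
    have hΓ := (Real.sqrt_le_iff.mp (hRIPb i)).2
    have hsingle : ∑ j, (Pi.single i 1 : Fin n → ℝ) j ^ 2 = 1 := by simp [Pi.single_apply]
    rw [hB, hsingle]
    linarith
  have key := neg_sq_sum_abs_mul_le_of_sparse_nonneg _ (by omega) hsparse hdiag x
  rw [hB] at key
  have hk : (0 : ℝ) < k - 1 := sub_pos.mpr (by exact_mod_cast hk1)
  rw [sub_le_comm, le_div_iff₀ hk]
  linarith

/-- Weaken-RIP yields the lower bound `‖Γx‖₂² ≥ α²‖x‖₂² − ‖x‖₁²(β² − α²)/(k−1)` for all `x`. -/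
theorem weakenRIP_lower_bound_l1
    {m n : ℕ} (Γ : Matrix (Fin m) (Fin n) ℝ)
    (k : ℕ) (hk1 : 1 < k) (hkn : k ≤ n)
    (α β : ℝ) (hα : 0 < α) (hβ : 0 < β)
    (hRIPa : ∀ x : Fin n → ℝ, {i | x i ≠ 0}.ncard ≤ k →
      α * Real.sqrt (∑ i, x i ^ 2) ≤ Real.sqrt (∑ j, (Γ.mulVec x) j ^ 2))
    (hRIPb : ∀ i : Fin n, Real.sqrt (∑ j, (Γ.mulVec (Pi.single i 1)) j ^ 2) ≤ β) :
    ∀ x : Fin n → ℝ,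
      α ^ 2 * (∑ i, x i ^ 2) - (∑ i, |x i|) ^ 2 * (β ^ 2 - α ^ 2) / ((k : ℝ) - 1)
        ≤ ∑ j, (Γ.mulVec x) j ^ 2 :=
  weakenRIP_lower_bound_l1_general Γ k hk1 α β hα hRIPa hRIPb
end

section
/- Let H be a finite-dimensional real inner product space, B a set of unit-norm atoms that is centrally symmetric and spanning, k > 1 an integer, A the k-simple subset relative to B, and suppose (H, A, ‖·‖_B) is a compressed sensing space with bound L > 0. Let Φ : H → ℝ^m be a linear map having the (k, α, β)-generalized-weaken-RIP for distortions α, β > 0 with α ≤ β. Fix θ ∈ (0,1), λ > 0, σ > 0, and ρ with √((β² − α²)/(α²(k−1))) < ρ < (1−θ)/(2L). Let x♮ ∈ H and w ∈ ℝ^m satisfy ‖Φᵀw‖_⋄ ≤ θλσ, where Φᵀ is the adjoint of Φ. Then any minimizer x* of the Lasso objective (1/2)‖Φx − (Φx♮ + w)‖₂² + λσ‖x‖_B over x ∈ H satisfies, for every a ∈ A, ‖x* − x♮‖ ≤ C₀ ‖x♮ − a‖_B + C₁ σ, where C₀ = ((1−θ)/(2ρ) − L)^{−1}, C₁ = (1+θ)λ/(α̃²ρ),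 and α̃² = α² − (β² − α²)/(ρ²(k−1)). -/
open scoped BigOperators RealInnerProductSpace

/-- `(H, A, ‖·‖_B)` is a compressed sensing space with bound `L`. -/
def IsCSSpace {H : Type*} [NormedAddCommGroup H] [InnerProductSpace ℝ H]
    (B A : Set H) (L : ℝ) : Prop :=
  (0 : H) ∈ A ∧ ∀ a ∈ A, ∀ v : H, ∃ z₁ z₂ : H, v = z₁ + z₂ ∧
    atomNorm B (a + z₁) = atomNorm B a + atomNorm B z₁ ∧ atomNorm B z₂ ≤ L * ‖v‖

/-- The dual norm of the atom norm. -/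
noncomputable def dualNorm {H : Type*} [NormedAddCommGroup H] [InnerProductSpace ℝ H]
    (B : Set H) (y : H) : ℝ :=
  sSup { r : ℝ | ∃ x : H, atomNorm B x ≤ 1 ∧ r = ⟪x, y⟫ }

/-!
Write `h = x⋆ - x♮`. Comparing the Lasso objective at `x⋆` with its values on the segment towards
`x♮`, and bounding the noise term through the dual norm, gives the basic inequality
`‖Φh‖² ≤ λσ (θ‖h‖_B + ‖x♮‖_B - ‖x⋆‖_B)`. Splitting `h = z₁ + z₂` by the compressed sensing property
at `a` turns it into a cone condition `(1 - θ)‖h‖_B ≤ 2‖x♮ - a‖_B + 2L‖h‖`. If `‖h‖ ≤ ρ‖h‖_B`, the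
cone condition alone gives `‖h‖ ≤ C₀‖x♮ - a‖_B`. Otherwise `‖h‖_B` is small, and the weaken RIP,
averaged over sums of `k` atoms sampled independently from a decomposition of `h`, yields
`α̃²‖h‖² ≤ ‖Φh‖²`; with the basic inequality this gives `‖h‖ ≤ C₁σ` unless `‖h‖ ≤ C₀‖x♮ - a‖_B`.
-/

open Filter Topology

section AtomNorm

variable {H : Type*} [AddCommGroup H] [Module ℝ H] {B : Set H}

def atomCosts (B : Set H) (x : H) : Set ℝ :=
  { r : ℝ | ∃ (S : Finset H) (σ : H → ℝ), ↑S ⊆ B ∧ (∀ b ∈ S, 0 ≤ σ b) ∧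
    x = ∑ b ∈ S, σ b • b ∧ r = ∑ b ∈ S, σ b }

theorem nonneg_of_mem_atomCosts {x : H} {r : ℝ} (hr : r ∈ atomCosts B x) : 0 ≤ r := by
  obtain ⟨S, σ, -, hσ, -, rfl⟩ := hr
  exact Finset.sum_nonneg hσ

theorem bddBelow_atomCosts (x : H) : BddBelow (atomCosts B x) :=
  ⟨0, fun _ => nonneg_of_mem_atomCosts⟩

theorem atomCosts_nonempty (hB : Spans B) (x : H) : (atomCosts B x).Nonempty := by
  obtain ⟨S, σ, hS, hσ, hx⟩ := hB x
  exact ⟨_, S, σ, hS, hσ, hx, rfl⟩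

theorem atomNorm_le_of_mem_atomCosts {x : H} {r : ℝ} (hr : r ∈ atomCosts B x) :
    atomNorm B x ≤ r :=
  csInf_le (bddBelow_atomCosts x) hr

theorem le_atomNorm_of_forall_le (hB : Spans B) {x : H} {c : ℝ}
    (h : ∀ r ∈ atomCosts B x, c ≤ r) : c ≤ atomNorm B x :=
  le_csInf (atomCosts_nonempty hB x) h

theorem atomNorm_mem_of_isClosed_s7 (hB : Spans B) {x : H} {s : Set ℝ} (hs : IsClosed s)
    (h : atomCosts B x ⊆ s) : atomNorm B x ∈ s :=
  hs.closure_subset_iff.2 h (csInf_mem_closure (atomCosts_nonempty hB x) (bddBelow_atomCosts x))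

theorem atomNorm_nonneg (hB : Spans B) (x : H) : 0 ≤ atomNorm B x :=
  le_atomNorm_of_forall_le hB fun _ => nonneg_of_mem_atomCosts

theorem atomNorm_le_one {b : H} (hb : b ∈ B) : atomNorm B b ≤ 1 :=
  atomNorm_le_of_mem_atomCosts ⟨{b}, fun _ => 1, by simpa using hb, by simp, by simp, by simp⟩

theorem atomNorm_zero (hB : Spans B) : atomNorm B (0 : H) = 0 :=
  le_antisymm (atomNorm_le_of_mem_atomCosts ⟨∅, 0, by simp, by simp, by simp, by simp⟩)
    (atomNorm_nonneg hB 0)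

theorem add_mem_atomCosts {x y : H} {r s : ℝ} (hr : r ∈ atomCosts B x)
    (hs : s ∈ atomCosts B y) : r + s ∈ atomCosts B (x + y) := by
  classical
  obtain ⟨S, σ, hS, hσ, rfl, rfl⟩ := hr
  obtain ⟨T, τ, hT, hτ, rfl, rfl⟩ := hs
  refine ⟨S ∪ T, fun b => (if b ∈ S then σ b else 0) + (if b ∈ T then τ b else 0),
    by simpa using Set.union_subset hS hT, fun b _ => ?_, ?_, ?_⟩
  · exact add_nonneg (by split_ifs with h <;> simp [hσ b, h])
      (by split_ifs with h <;> simp [hτ b, h])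
  all_goals simp only [add_smul, ite_smul, zero_smul, Finset.sum_add_distrib, Finset.sum_ite_mem,
    Finset.union_inter_cancel_left, Finset.union_inter_cancel_right]

theorem smul_mem_atomCosts {x : H} {r c : ℝ} (hc : 0 ≤ c) (hr : r ∈ atomCosts B x) :
    c * r ∈ atomCosts B (c • x) := by
  obtain ⟨S, σ, hS, hσ, rfl, rfl⟩ := hr
  exact ⟨S, fun b => c * σ b, hS, fun b hb => mul_nonneg hc (hσ b hb),
    by simp [Finset.smul_sum, smul_smul], Finset.mul_sum _ _ _⟩

theorem mem_atomCosts_neg (hBsym : ∀ b ∈ B, -b ∈ B) {x : H} {r : ℝ}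
    (hr : r ∈ atomCosts B x) : r ∈ atomCosts B (-x) := by
  classical
  obtain ⟨S, σ, hS, hσ, rfl, rfl⟩ := hr
  have hinj : Set.InjOn (fun b : H => -b) S := fun _ _ _ _ h => neg_injective h
  refine ⟨S.image (-·), fun c => σ (-c), ?_, ?_, ?_, ?_⟩
  · intro c hc
    obtain ⟨b, hb, rfl⟩ := Finset.mem_image.1 hc
    exact hBsym b (hS hb)
  · simpa using hσ
  · simp [Finset.sum_image hinj, ← Finset.sum_neg_distrib]
  · simp [Finset.sum_image hinj]

theorem atomNorm_add_le (hB : Spans B) (x y : H) :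
    atomNorm B (x + y) ≤ atomNorm B x + atomNorm B y := by
  rw [← sub_le_iff_le_add]
  refine le_atomNorm_of_forall_le hB fun r hr => ?_
  rw [sub_le_comm]
  refine le_atomNorm_of_forall_le hB fun s hs => ?_
  rw [sub_le_iff_le_add']
  exact atomNorm_le_of_mem_atomCosts (add_mem_atomCosts hr hs)

theorem atomNorm_smul_le (hB : Spans B) {c : ℝ} (hc : 0 ≤ c) (x : H) :
    atomNorm B (c • x) ≤ c * atomNorm B x := by
  rcases hc.eq_or_lt with rfl | hc
  · simp [atomNorm_zero hB]
  rw [← div_le_iff₀' hc]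
  refine le_atomNorm_of_forall_le hB fun r hr => ?_
  rw [div_le_iff₀' hc]
  exact atomNorm_le_of_mem_atomCosts (smul_mem_atomCosts hc.le hr)

theorem atomNorm_neg_le (hBsym : ∀ b ∈ B, -b ∈ B) (hB : Spans B) (x : H) :
    atomNorm B (-x) ≤ atomNorm B x :=
  le_atomNorm_of_forall_le hB fun _ hr => atomNorm_le_of_mem_atomCosts (mem_atomCosts_neg hBsym hr)

theorem convexOn_atomNorm (hB : Spans B) : ConvexOn ℝ Set.univ (atomNorm B) :=
  ⟨convex_univ, fun x _ y _ _ _ ha hb _ => (atomNorm_add_le hB _ _).trans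
    (add_le_add (atomNorm_smul_le hB ha x) (atomNorm_smul_le hB hb y))⟩

noncomputable def atomSeminorm (B : Set H) (hBsym : ∀ b ∈ B, -b ∈ B) (hB : Spans B) :
    Seminorm ℝ H :=
  Seminorm.ofSMulLE (atomNorm B) (atomNorm_zero hB) (atomNorm_add_le hB) fun c x => by
    rcases le_total 0 c with hc | hc
    · simpa [abs_of_nonneg hc] using atomNorm_smul_le hB hc x
    · calc atomNorm B (c • x) ≤ atomNorm B (-c • x) := by
            simpa using atomNorm_neg_le hBsym hB (-c • x)
        _ ≤ ‖c‖ * atomNorm B x := by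
            simpa [abs_of_nonpos hc] using atomNorm_smul_le hB (neg_nonneg.2 hc) x

end AtomNorm

section DualNorm

variable {H : Type*} [NormedAddCommGroup H] [InnerProductSpace ℝ H] {B : Set H}

theorem norm_le_atomNorm (hB : Spans B) (hBunit : ∀ b ∈ B, ‖b‖ = 1) (x : H) :
    ‖x‖ ≤ atomNorm B x := by
  refine le_atomNorm_of_forall_le hB fun r hr => ?_
  obtain ⟨S, σ, hS, hσ, rfl, rfl⟩ := hr
  refine (norm_sum_le _ _).trans_eq (Finset.sum_congr rfl fun b hb => ?_)
  rw [norm_smul, hBunit b (hS hb), mul_one, Real.norm_of_nonneg (hσ b hb)]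

theorem inner_le_dualNorm (hB : Spans B) (hBunit : ∀ b ∈ B, ‖b‖ = 1) {x : H}
    (hx : atomNorm B x ≤ 1) (y : H) : ⟪x, y⟫ ≤ dualNorm B y := by
  refine le_csSup ⟨‖y‖, ?_⟩ ⟨x, hx, rfl⟩
  rintro _ ⟨z, hz, rfl⟩
  calc ⟪z, y⟫ ≤ ‖z‖ * ‖y‖ := real_inner_le_norm z y
    _ ≤ ‖y‖ := mul_le_of_le_one_left (norm_nonneg y) ((norm_le_atomNorm hB hBunit z).trans hz)

theorem inner_le_atomNorm_mul_dualNorm (hB : Spans B) (hBunit : ∀ b ∈ B, ‖b‖ = 1) (x y : H) :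
    ⟪x, y⟫ ≤ atomNorm B x * dualNorm B y := by
  refine atomNorm_mem_of_isClosed_s7 hB (s := {r | ⟪x, y⟫ ≤ r * dualNorm B y})
    (isClosed_le continuous_const (continuous_mul_const _)) fun r hr => ?_
  obtain ⟨S, σ, hS, hσ, rfl, rfl⟩ := hr
  simp only [Set.mem_ofPred_eq, sum_inner, real_inner_smul_left, Finset.sum_mul]
  exact Finset.sum_le_sum fun b hb => mul_le_mul_of_nonneg_left
    (inner_le_dualNorm hB hBunit (atomNorm_le_one (hS hb)) y) (hσ b hb)

end DualNorm

section Averaging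

variable {τ : Type*} [Fintype τ] {E : Type*} [NormedAddCommGroup E] [InnerProductSpace ℝ E]
  {q : τ → ℝ}

theorem sum_fin_succ_pi_eq_sum_cons {M : Type*} [AddCommMonoid M] {k : ℕ}
    (F : (Fin (k + 1) → τ) → M) : ∑ f, F f = ∑ a, ∑ g : Fin k → τ, F (Fin.cons a g) := by
  rw [← (Fin.consEquiv fun _ => τ).sum_comp, Fintype.sum_prod_type]
  rfl

theorem sum_pi_prod_eq_one (hq : ∑ i, q i = 1) (k : ℕ) : ∑ f : Fin k → τ, ∏ j, q (f j) = 1 := by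
  rw [← Fintype.sum_pow, hq, one_pow]

theorem sum_pi_prod_smul_sum (hq : ∑ i, q i = 1) (G : τ → E) (k : ℕ) :
    ∑ f : Fin k → τ, (∏ j, q (f j)) • ∑ j, G (f j) = (k : ℝ) • ∑ i, q i • G i := by
  induction k with
  | zero => simp
  | succ k ih =>
    simp only [sum_fin_succ_pi_eq_sum_cons, Fin.prod_univ_succ, Fin.sum_univ_succ, Fin.cons_zero,
      Fin.cons_succ, mul_smul, smul_add, Finset.sum_add_distrib, ← Finset.smul_sum,
      ← Finset.sum_smul, sum_pi_prod_eq_one hq, one_smul, ih, hq]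
    push_cast
    rw [add_smul, one_smul, add_comm]

theorem sum_pi_prod_mul_norm_sum_sq (hq : ∑ i, q i = 1) (G : τ → E) (k : ℕ) :
    ∑ f : Fin k → τ, (∏ j, q (f j)) * ‖∑ j, G (f j)‖ ^ 2 =
      ((k : ℝ) ^ 2 - k) * ‖∑ i, q i • G i‖ ^ 2 + k * ∑ i, q i * ‖G i‖ ^ 2 := by
  induction k with
  | zero => simp
  | succ k ih =>
    set μ := ∑ i, q i • G i
    have cross : ∀ a, ∑ g : Fin k → τ, (∏ j, q (g j)) * ⟪G a, ∑ j, G (g j)⟫ = k * ⟪G a, μ⟫ := by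
      intro a
      simp_rw [← real_inner_smul_right, ← inner_sum, sum_pi_prod_smul_sum hq, real_inner_smul_right]
      rfl
    have inner_mean : ∑ a, q a * ⟪G a, μ⟫ = ‖μ‖ ^ 2 := by
      simp_rw [← real_inner_smul_left, ← sum_inner]
      exact real_inner_self_eq_norm_sq μ
    have cross_mean : ∑ a, q a * (2 * (k * ⟪G a, μ⟫)) = 2 * k * ‖μ‖ ^ 2 := by
      rw [← inner_mean, Finset.mul_sum]
      exact Finset.sum_congr rfl fun _ _ => by ring
    simp only [sum_fin_succ_pi_eq_sum_cons, Fin.prod_univ_succ, Fin.sum_univ_succ, Fin.cons_zero,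
      Fin.cons_succ, norm_add_sq_real]
    have expand : ∀ a (g : Fin k → τ), q a * (∏ j, q (g j)) *
        (‖G a‖ ^ 2 + 2 * ⟪G a, ∑ j, G (g j)⟫ + ‖∑ j, G (g j)‖ ^ 2) =
        q a * ((∏ j, q (g j)) * ‖G a‖ ^ 2 + 2 * ((∏ j, q (g j)) * ⟪G a, ∑ j, G (g j)⟫) +
          (∏ j, q (g j)) * ‖∑ j, G (g j)‖ ^ 2) := fun _ _ => by ring
    simp_rw [expand, ← Finset.mul_sum, Finset.sum_add_distrib, ← Finset.sum_mul, ← Finset.mul_sum,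
      sum_pi_prod_eq_one hq, cross, ih, mul_add, Finset.sum_add_distrib]
    rw [cross_mean, ← Finset.sum_mul, ← Finset.sum_mul, hq]
    simp only [one_mul]
    push_cast
    ring

end Averaging

section WeakenRIP

def HasWeakenRIP {H F : Type*} [NormedAddCommGroup H] [Module ℝ H] [NormedAddCommGroup F]
    [Module ℝ F] (B : Set H) (k : ℕ) (α β : ℝ) (Φ : H →ₗ[ℝ] F) : Prop :=
  (∀ u ∈ simpleSet B k, α * ‖u‖ ≤ ‖Φ u‖) ∧ ∀ b ∈ B, ‖Φ b‖ ≤ β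

variable {H F : Type*} [NormedAddCommGroup H] [InnerProductSpace ℝ H] [NormedAddCommGroup F]
  [InnerProductSpace ℝ F] {B : Set H} {k : ℕ} {α β : ℝ} {Φ : H →ₗ[ℝ] F}

/-- Average the lower RIP bound over `k` independent samples of atoms drawn with law `q`. -/
theorem HasWeakenRIP.sq_mul_le_of_convex_combination (hΦ : HasWeakenRIP B k α β Φ) (hk : 0 < k)
    (hα : 0 ≤ α) (hBunit : ∀ b ∈ B, ‖b‖ = 1) {τ : Type*} [Fintype τ] {q : τ → ℝ}
    (hq0 : ∀ i, 0 ≤ q i) (hq : ∑ i, q i = 1) {b : τ → H} (hb : ∀ i, b i ∈ B) :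
    α ^ 2 * ((k - 1) * ‖∑ i, q i • b i‖ ^ 2 + 1) ≤
      (k - 1) * ‖Φ (∑ i, q i • b i)‖ ^ 2 + β ^ 2 := by
  have sample : ∀ f : Fin k → τ, α ^ 2 * ‖∑ j, b (f j)‖ ^ 2 ≤ ‖∑ j, Φ (b (f j))‖ ^ 2 := by
    intro f
    have hmem : ∑ j, b (f j) ∈ simpleSet B k :=
      ⟨1, b ∘ f, fun _ => zero_le_one, fun j => hb (f j), by simp⟩
    rw [← map_sum, ← mul_pow]
    exact pow_le_pow_left₀ (by positivity) (hΦ.1 _ hmem) 2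
  have average : α ^ 2 * ∑ f : Fin k → τ, (∏ j, q (f j)) * ‖∑ j, b (f j)‖ ^ 2 ≤
      ∑ f : Fin k → τ, (∏ j, q (f j)) * ‖∑ j, Φ (b (f j))‖ ^ 2 := by
    rw [Finset.mul_sum]
    refine Finset.sum_le_sum fun f _ => ?_
    rw [mul_left_comm]
    exact mul_le_mul_of_nonneg_left (sample f) (Finset.prod_nonneg fun j _ => hq0 (f j))
  rw [sum_pi_prod_mul_norm_sum_sq hq, sum_pi_prod_mul_norm_sum_sq hq fun i => Φ (b i)] at average
  simp_rw [← map_smul, ← map_sum] at average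
  have unit_mean : ∑ i, q i * ‖b i‖ ^ 2 = 1 := by simp [hBunit _ (hb _), hq]
  have image_mean : ∑ i, q i * ‖Φ (b i)‖ ^ 2 ≤ β ^ 2 := by
    calc ∑ i, q i * ‖Φ (b i)‖ ^ 2 ≤ ∑ i, q i * β ^ 2 := Finset.sum_le_sum fun i _ =>
          mul_le_mul_of_nonneg_left (pow_le_pow_left₀ (norm_nonneg _) (hΦ.2 _ (hb i)) 2) (hq0 i)
      _ = β ^ 2 := by rw [← Finset.sum_mul, hq, one_mul]
  have hk' : (0 : ℝ) < k := by exact_mod_cast hk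
  rw [unit_mean] at average
  refine le_of_mul_le_mul_left ?_ hk'
  nlinarith

theorem HasWeakenRIP.sq_mul_norm_sq_le (hΦ : HasWeakenRIP B k α β Φ) (hB : Spans B)
    (hBunit : ∀ b ∈ B, ‖b‖ = 1) (hk : 1 < k) (hα : 0 ≤ α) (v : H) :
    α ^ 2 * ‖v‖ ^ 2 ≤ ‖Φ v‖ ^ 2 + (β ^ 2 - α ^ 2) / (k - 1) * atomNorm B v ^ 2 := by
  refine atomNorm_mem_of_isClosed_s7 hB
    (s := {r | α ^ 2 * ‖v‖ ^ 2 ≤ ‖Φ v‖ ^ 2 + (β ^ 2 - α ^ 2) / (k - 1) * r ^ 2})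
    (isClosed_le continuous_const (by fun_prop)) fun r hr => ?_
  rcases (nonneg_of_mem_atomCosts hr).eq_or_lt with rfl | hr0
  · have : v = 0 := norm_le_zero_iff.1
      ((norm_le_atomNorm hB hBunit v).trans (atomNorm_le_of_mem_atomCosts hr))
    simp [this]
  obtain ⟨S, σ, hS, hσ, hv, hr⟩ := hr
  have hmean : ∑ i : S, (σ i / r) • (i : H) = r⁻¹ • v := by
    rw [hv, Finset.smul_sum, ← Finset.sum_coe_sort S]
    simp_rw [smul_smul, div_eq_inv_mul]
  have hq : ∑ i : S, σ i / r = 1 := by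
    rw [Finset.sum_coe_sort S (fun b => σ b / r), ← Finset.sum_div, ← hr, div_self hr0.ne']
  have := hΦ.sq_mul_le_of_convex_combination (by omega) hα hBunit (q := fun i : S => σ i / r)
    (fun i => div_nonneg (hσ i i.2) hr0.le) hq (fun i => hS i.2)
  rw [hmean, map_smul, norm_smul, norm_smul, Real.norm_of_nonneg (inv_nonneg.2 hr0.le),
    mul_pow, mul_pow, inv_pow] at this
  have hK : (0 : ℝ) < k - 1 := by
    rw [sub_pos]
    exact_mod_cast hk
  show α ^ 2 * ‖v‖ ^ 2 ≤ ‖Φ v‖ ^ 2 + (β ^ 2 - α ^ 2) / (k - 1) * r ^ 2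
  rw [div_mul_eq_mul_div, ← sub_le_iff_le_add', le_div_iff₀ hK]
  have scaled : α ^ 2 * ((k - 1) * ‖v‖ ^ 2 + r ^ 2) ≤ (k - 1) * ‖Φ v‖ ^ 2 + β ^ 2 * r ^ 2 := by
    calc α ^ 2 * ((k - 1) * ‖v‖ ^ 2 + r ^ 2)
        = r ^ 2 * (α ^ 2 * ((k - 1) * ((r ^ 2)⁻¹ * ‖v‖ ^ 2) + 1)) := by field_simp
      _ ≤ r ^ 2 * ((k - 1) * ((r ^ 2)⁻¹ * ‖Φ v‖ ^ 2) + β ^ 2) :=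
        mul_le_mul_of_nonneg_left this (sq_nonneg r)
      _ = (k - 1) * ‖Φ v‖ ^ 2 + β ^ 2 * r ^ 2 := by field_simp
  linear_combination scaled

theorem HasWeakenRIP.restricted_lower_bound (hΦ : HasWeakenRIP B k α β Φ) (hB : Spans B)
    (hBunit : ∀ b ∈ B, ‖b‖ = 1) (hk : 1 < k) (hα : 0 ≤ α) (hαβ : α ≤ β) {ρ : ℝ} (hρ : 0 < ρ)
    {v : H} (hv : ρ * atomNorm B v ≤ ‖v‖) :
    (α ^ 2 - (β ^ 2 - α ^ 2) / (ρ ^ 2 * (k - 1))) * ‖v‖ ^ 2 ≤ ‖Φ v‖ ^ 2 := by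
  have hK : (0 : ℝ) < k - 1 := by
    rw [sub_pos]
    exact_mod_cast hk
  have hslack : (β ^ 2 - α ^ 2) / (k - 1) * atomNorm B v ^ 2 ≤
      (β ^ 2 - α ^ 2) / (ρ ^ 2 * (k - 1)) * ‖v‖ ^ 2 := by
    rw [show (β ^ 2 - α ^ 2) / (ρ ^ 2 * (k - 1)) * ‖v‖ ^ 2 =
      (β ^ 2 - α ^ 2) / (k - 1) * (‖v‖ / ρ) ^ 2 by field_simp]
    have hβα : 0 ≤ β ^ 2 - α ^ 2 := sub_nonneg.2 (pow_le_pow_left₀ hα hαβ 2)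
    gcongr
    · exact atomNorm_nonneg hB v
    · rwa [le_div_iff₀' hρ]
  linarith [hΦ.sq_mul_norm_sq_le hB hBunit hk hα v]

end WeakenRIP

section Lasso

variable {E F : Type*} [NormedAddCommGroup E] [InnerProductSpace ℝ E] [NormedAddCommGroup F]
  [InnerProductSpace ℝ F]

/-- Compare the objective at `x₀` with its value at `x₀ + t • (z - x₀)` and let `t → 0⁺`. -/
theorem inner_residual_le_of_forall_le (Φ : E →ₗ[ℝ] F) (y : F) {P : E → ℝ}
    (hP : ConvexOn ℝ Set.univ P) {x₀ : E}
    (hmin : ∀ x, 1 / 2 * ‖Φ x₀ - y‖ ^ 2 + P x₀ ≤ 1 / 2 * ‖Φ x - y‖ ^ 2 + P x) (z : E) :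
    ⟪Φ x₀ - y, Φ (x₀ - z)⟫ ≤ P z - P x₀ := by
  set r := Φ x₀ - y
  set d := Φ (x₀ - z)
  have step : ∀ t ∈ Set.Ioc (0 : ℝ) 1, ⟪r, d⟫ - (P z - P x₀) ≤ t / 2 * ‖d‖ ^ 2 := by
    rintro t ⟨ht0, ht1⟩
    have hx := hmin ((1 - t) • x₀ + t • z)
    have hres : Φ ((1 - t) • x₀ + t • z) - y = r - t • d := by
      simp only [r, d, map_add, map_smul, map_sub]
      module
    have hconv : P ((1 - t) • x₀ + t • z) ≤ (1 - t) * P x₀ + t * P z :=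
      hP.2 (Set.mem_univ x₀) (Set.mem_univ z) (by linarith) ht0.le (by ring)
    rw [hres, norm_sub_sq_real r, real_inner_smul_right, norm_smul, Real.norm_of_nonneg ht0.le,
      mul_pow] at hx
    have : t * (⟪r, d⟫ - (P z - P x₀)) ≤ t * (t / 2 * ‖d‖ ^ 2) := by linarith
    exact le_of_mul_le_mul_left this ht0
  have hlim : Tendsto (fun t : ℝ => t / 2 * ‖d‖ ^ 2) (𝓝[>] 0) (𝓝 0) := by
    have := (show Continuous fun t : ℝ => t / 2 * ‖d‖ ^ 2 by fun_prop).tendsto 0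
    simpa using tendsto_nhdsWithin_of_tendsto_nhds this
  exact sub_nonpos.1 (ge_of_tendsto hlim (eventually_of_mem (Ioc_mem_nhdsGT one_pos) step))

theorem lasso_basic_inequality [FiniteDimensional ℝ E] [FiniteDimensional ℝ F] {B : Set E}
    (hB : Spans B) (hBunit : ∀ b ∈ B, ‖b‖ = 1) (Φ : E →ₗ[ℝ] F) (xnat xstar : E) (w : F)
    {s θ : ℝ} (hs : 0 ≤ s) (hw : dualNorm B (LinearMap.adjoint Φ w) ≤ θ * s)
    (hmin : ∀ x, 1 / 2 * ‖Φ xstar - (Φ xnat + w)‖ ^ 2 + s * atomNorm B xstar ≤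
      1 / 2 * ‖Φ x - (Φ xnat + w)‖ ^ 2 + s * atomNorm B x) :
    ‖Φ (xstar - xnat)‖ ^ 2 ≤
      s * (θ * atomNorm B (xstar - xnat) + atomNorm B xnat - atomNorm B xstar) := by
  have hopt := inner_residual_le_of_forall_le Φ (Φ xnat + w) ((convexOn_atomNorm hB).smul hs)
    hmin xnat
  have hnoise : ⟪w, Φ (xstar - xnat)⟫ ≤ atomNorm B (xstar - xnat) * (θ * s) := by
    rw [real_inner_comm, ← LinearMap.adjoint_inner_right]
    exact (inner_le_atomNorm_mul_dualNorm hB hBunit _ _).trans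
      (mul_le_mul_of_nonneg_left hw (atomNorm_nonneg hB _))
  rw [show Φ xstar - (Φ xnat + w) = Φ (xstar - xnat) - w by rw [map_sub]; abel,
    inner_sub_left, real_inner_self_eq_norm_sq] at hopt
  simp only [smul_eq_mul] at hopt
  linear_combination hopt + hnoise

end Lasso

theorem Seminorm.sub_le_of_decomposable {E : Type*} [AddCommGroup E] [Module ℝ E]
    (p : Seminorm ℝ E) {x y a z₁ z₂ : E} (hdec : y - x = z₁ + z₂)
    (hadd : p (a + z₁) = p a + p z₁) : p x - p y ≤ 2 * p (x - a) + p z₂ - p z₁ := by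
  have hx : p x ≤ p a + p (x - a) := by simpa using map_add_le_add p a (x - a)
  have hz : p (a + z₁) ≤ p y + p (x - a) + p z₂ := by
    rw [show a + z₁ = y - (x - a) - z₂ by rw [sub_eq_iff_eq_add'.1 hdec]; abel]
    exact (map_sub_le_add p _ _).trans (add_le_add_left (map_sub_le_add p _ _) _)
  linarith

theorem lasso_error_le_of_bounds {n P Q D Z₁ Z₂ θ s L ρ A : ℝ} (hθ0 : 0 ≤ θ) (hθ1 : θ < 1)
    (hs : 0 < s) (hρ : 0 < ρ) (hA : 0 < A) (hL : 0 ≤ L) (hc : 0 < (1 - θ) / (2 * ρ) - L)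
    (hn : 0 ≤ n) (hD : 0 ≤ D) (hZ₁ : 0 ≤ Z₁) (hZ₂ : Z₂ ≤ L * n) (hP : P ≤ Z₁ + Z₂)
    (hQ0 : 0 ≤ Q) (hQ : Q ≤ s * (θ * P + 2 * D + Z₂ - Z₁))
    (hrestricted : ρ * P < n → A * n ^ 2 ≤ Q) :
    n ≤ ((1 - θ) / (2 * ρ) - L)⁻¹ * D + (1 + θ) * s / (A * ρ) := by
  set c := (1 - θ) / (2 * ρ) - L
  have hc_def : 2 * ρ * c = 1 - θ - 2 * ρ * L := by
    simp only [c]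
    field_simp
  have hcone : (1 - θ) * P ≤ 2 * D + 2 * L * n := by
    have : 0 ≤ θ * P + 2 * D + Z₂ - Z₁ := (mul_nonneg_iff_of_pos_left hs).1 (hQ0.trans hQ)
    nlinarith [mul_le_mul_of_nonneg_left hP hθ0]
  have hcases : c * n ≤ D ∨ A * ρ * n ≤ s := by
    rcases le_or_gt n (ρ * P) with hnP | hnP
    · left
      nlinarith [mul_le_mul_of_nonneg_left hnP (sub_nonneg.2 hθ1.le)]
    · by_contra! h
      have hbracket : ρ * (θ * P + 2 * D + Z₂ - Z₁) ≤ n := by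
        nlinarith [mul_le_mul_of_nonneg_left hnP.le hθ0, mul_lt_mul_of_pos_left h.1 hρ,
          mul_le_mul_of_nonneg_left hZ₂ hρ.le, mul_nonneg hρ.le hZ₁,
          mul_nonneg (mul_nonneg hρ.le hL) hn]
      have hquad : A * ρ * n * n ≤ s * n := by
        nlinarith [mul_le_mul_of_nonneg_left (hrestricted hnP) hρ.le,
          mul_le_mul_of_nonneg_left hQ hρ.le, mul_le_mul_of_nonneg_left hbracket hs.le]
      have hnpos : 0 < n := by nlinarith [mul_pos hA hρ]
      linarith [le_of_mul_le_mul_right hquad hnpos, h.2]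
  have hC₀ : 0 ≤ c⁻¹ * D := mul_nonneg (inv_nonneg.2 hc.le) hD
  have hC₁ : s / (A * ρ) ≤ (1 + θ) * s / (A * ρ) :=
    div_le_div_of_nonneg_right (le_mul_of_one_le_left hs.le (by linarith)) (mul_pos hA hρ).le
  rcases hcases with h | h
  · have : n ≤ c⁻¹ * D := by rwa [inv_mul_eq_div, le_div_iff₀' hc]
    linarith [div_nonneg hs.le (mul_pos hA hρ).le]
  · have : n ≤ s / (A * ρ) := by rwa [le_div_iff₀' (mul_pos hA hρ)]
    linarith

theorem sq_sub_div_pos_of_sqrt_lt {α β ρ K : ℝ} (hα : 0 < α) (hK : 0 < K)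
    (hρ : Real.sqrt ((β ^ 2 - α ^ 2) / (α ^ 2 * K)) < ρ) :
    0 < α ^ 2 - (β ^ 2 - α ^ 2) / (ρ ^ 2 * K) := by
  have hρ0 : 0 < ρ := (Real.sqrt_nonneg _).trans_lt hρ
  have := Real.lt_sq_of_sqrt_lt hρ
  rw [div_lt_iff₀ (by positivity)] at this
  rw [sub_pos, div_lt_iff₀ (by positivity)]
  linarith

theorem weakenRIP_stable_robust_lasso_general
    {H : Type*} [NormedAddCommGroup H] [InnerProductSpace ℝ H] [FiniteDimensional ℝ H]
    {m : ℕ} (B : Set H)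
    (hBsym : ∀ b ∈ B, -b ∈ B) (hBspan : Spans B) (hBunit : ∀ b ∈ B, ‖b‖ = 1)
    (k : ℕ) (hk : 1 < k) (L : ℝ) (hL : 0 < L)
    (hCS : IsCSSpace B (simpleSet B k) L)
    (α β : ℝ) (hα : 0 < α) (hαβ : α ≤ β)
    (Φ : H →ₗ[ℝ] EuclideanSpace ℝ (Fin m))
    (hRIPa : ∀ u ∈ simpleSet B k, α * ‖u‖ ≤ ‖Φ u‖)
    (hRIPb : ∀ b ∈ B, ‖Φ b‖ ≤ β)
    (θ lam σ ρ : ℝ) (hθ0 : 0 < θ) (hθ1 : θ < 1) (hlam : 0 < lam) (hσ : 0 < σ)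
    (hρ1 : Real.sqrt ((β ^ 2 - α ^ 2) / (α ^ 2 * ((k : ℝ) - 1))) < ρ)
    (hρ2 : ρ < (1 - θ) / (2 * L))
    (xnat : H) (w : EuclideanSpace ℝ (Fin m))
    (hw : dualNorm B ((LinearMap.adjoint Φ) w) ≤ θ * lam * σ)
    (xstar : H)
    (hmin : ∀ x : H,
      (1 / 2) * ‖Φ xstar - (Φ xnat + w)‖ ^ 2 + lam * σ * atomNorm B xstar ≤
      (1 / 2) * ‖Φ x - (Φ xnat + w)‖ ^ 2 + lam * σ * atomNorm B x) :
    ∀ a ∈ simpleSet B k,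
      ‖xstar - xnat‖ ≤
        ((1 - θ) / (2 * ρ) - L)⁻¹ * atomNorm B (xnat - a)
        + ((1 + θ) * lam /
            ((α ^ 2 - (β ^ 2 - α ^ 2) / (ρ ^ 2 * ((k : ℝ) - 1))) * ρ)) * σ := by
  intro a ha
  have hρ : 0 < ρ := (Real.sqrt_nonneg _).trans_lt hρ1
  have hK : (0 : ℝ) < k - 1 := by
    rw [sub_pos]
    exact_mod_cast hk
  have hA := sq_sub_div_pos_of_sqrt_lt hα hK hρ1
  have hc : 0 < (1 - θ) / (2 * ρ) - L := by
    rw [lt_div_iff₀ (by positivity)] at hρ2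
    rw [sub_pos, lt_div_iff₀ (by positivity)]
    linarith
  obtain ⟨z₁, z₂, hdec, hadd, hz₂⟩ := hCS.2 a ha (xstar - xnat)
  have hbasic := lasso_basic_inequality hBspan hBunit Φ xnat xstar w (mul_pos hlam hσ).le
    (hw.trans_eq (mul_assoc _ _ _)) hmin
  have hcone : atomNorm B xnat - atomNorm B xstar ≤
      2 * atomNorm B (xnat - a) + atomNorm B z₂ - atomNorm B z₁ :=
    (atomSeminorm B hBsym hBspan).sub_le_of_decomposable hdec hadd
  have hsplit : atomNorm B (xstar - xnat) ≤ atomNorm B z₁ + atomNorm B z₂ :=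
    hdec ▸ atomNorm_add_le hBspan z₁ z₂
  refine (lasso_error_le_of_bounds hθ0.le hθ1 (mul_pos hlam hσ) hρ hA hL.le hc (norm_nonneg _)
    (atomNorm_nonneg hBspan _) (atomNorm_nonneg hBspan z₁) hz₂ hsplit (sq_nonneg _)
    (hbasic.trans (mul_le_mul_of_nonneg_left (by linarith) (mul_pos hlam hσ).le))
    fun h => HasWeakenRIP.restricted_lower_bound ⟨hRIPa, hRIPb⟩ hBspan hBunit hk hα.le hαβ hρ
      h.le).trans_eq (by ring)

/-- Weaken-RIP implies stable and robust recovery via the Lasso. -/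
theorem weakenRIP_stable_robust_lasso
    {H : Type*} [NormedAddCommGroup H] [InnerProductSpace ℝ H] [FiniteDimensional ℝ H]
    {m : ℕ} (B : Set H)
    (hBsym : ∀ b ∈ B, -b ∈ B) (hBspan : Spans B) (hBunit : ∀ b ∈ B, ‖b‖ = 1)
    (k : ℕ) (hk : 1 < k) (L : ℝ) (hL : 0 < L)
    (hCS : IsCSSpace B (simpleSet B k) L)
    (α β : ℝ) (hα : 0 < α) (hβ : 0 < β) (hαβ : α ≤ β)
    (Φ : H →ₗ[ℝ] EuclideanSpace ℝ (Fin m))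
    (hRIPa : ∀ u ∈ simpleSet B k, α * ‖u‖ ≤ ‖Φ u‖)
    (hRIPb : ∀ b ∈ B, ‖Φ b‖ ≤ β)
    (θ lam σ ρ : ℝ) (hθ0 : 0 < θ) (hθ1 : θ < 1) (hlam : 0 < lam) (hσ : 0 < σ)
    (hρ1 : Real.sqrt ((β ^ 2 - α ^ 2) / (α ^ 2 * ((k : ℝ) - 1))) < ρ)
    (hρ2 : ρ < (1 - θ) / (2 * L))
    (xnat : H) (w : EuclideanSpace ℝ (Fin m))
    (hw : dualNorm B ((LinearMap.adjoint Φ) w) ≤ θ * lam * σ)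
    (xstar : H)
    (hmin : ∀ x : H,
      (1 / 2) * ‖Φ xstar - (Φ xnat + w)‖ ^ 2 + lam * σ * atomNorm B xstar ≤
      (1 / 2) * ‖Φ x - (Φ xnat + w)‖ ^ 2 + lam * σ * atomNorm B x) :
    ∀ a ∈ simpleSet B k,
      ‖xstar - xnat‖ ≤
        ((1 - θ) / (2 * ρ) - L)⁻¹ * atomNorm B (xnat - a)
        + ((1 + θ) * lam /
            ((α ^ 2 - (β ^ 2 - α ^ 2) / (ρ ^ 2 * ((k : ℝ) - 1))) * ρ)) * σ :=
  weakenRIP_stable_robust_lasso_general B hBsym hBspan hBunit k hk L hL hCS α β hα hαβ Φ hRIPa hRIPb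
    θ lam σ ρ hθ0 hθ1 hlam hσ hρ1 hρ2 xnat w hw xstar hmin
end
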